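/- arXiv:1509.04205 — 9 statements merged into one kernel-verified Lean document; each statement's English description precedes it below -/
import Mathlib

section
/- A non-decreasing sequence of nonnegative integers (s_1, ..., s_n) is the score sequence of some n-tournament if and only if for all k with 1 ≤ k ≤ n, s_1 + ... + s_k ≥ C(k,2), with equality when k = n. -/
open Finset

/-- A tournament on `Fin n`: irreflexive and for distinct vertices exactly one direction. -/
def IsTournament {n : ℕ} (r : Fin n → Fin n → Bool) : Prop :=
  (∀ i, r i i = false) ∧ ∀ i j : Fin n, i ≠ j → (r i j = !(r j i))

/-- The score (out-degree) of a vertex. -/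
def score {n : ℕ} (r : Fin n → Fin n → Bool) (i : Fin n) : ℕ :=
  (Finset.univ.filter (fun j => r i j = true)).card

/-- `s` (restricted to indices `< n`) is the non-decreasing score sequence of tournament `r`. -/
def IsScoreSeqOf {n : ℕ} (s : ℕ → ℤ) (r : Fin n → Fin n → Bool) : Prop :=
  (∀ i j : Fin n, i ≤ j → s i.1 ≤ s j.1) ∧
  ∃ σ : Equiv.Perm (Fin n), ∀ i : Fin n, (score r (σ i) : ℤ) = s i.1

/-- `s` is the score sequence of some `n`-tournament. -/
def IsScoreSeq (n : ℕ) (s : ℕ → ℤ) : Prop :=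
  ∃ r : Fin n → Fin n → Bool, IsTournament r ∧ IsScoreSeqOf s r

/-- Strong connectivity: a directed path from any vertex to any other. -/
def IsStrong {n : ℕ} (r : Fin n → Fin n → Bool) : Prop :=
  ∀ i j : Fin n, Relation.ReflTransGen (fun a b => r a b = true) i j

/-- The regular (n odd) resp. nearly-regular (n even) sequence. -/
def regSeq (n : ℕ) (i : ℕ) : ℤ :=
  if Odd n then ((n : ℤ) - 1) / 2
  else if i < n / 2 then ((n : ℤ) - 2) / 2 else (n : ℤ) / 2

/-! ### Counting lemmas -/

lemma two_mul_choose_two (c : ℕ) : 2 * c.choose 2 = c * (c - 1) := by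
  rw [Nat.choose_two_right, Nat.mul_div_cancel']
  rcases c with _ | m
  · simp
  · simpa [Nat.mul_comm] using (Nat.even_mul_succ_self m).two_dvd

lemma choose_add_two (a b : ℕ) : (((a+b).choose 2 : ℕ) : ℤ) = (a.choose 2 : ℤ) + a * b + b.choose 2 := by
  have h1 := two_mul_choose_two (a+b)
  have h2 := two_mul_choose_two a
  have h3 := two_mul_choose_two b
  have key : (a+b) * (a+b-1) = a*(a-1) + 2*(a*b) + b*(b-1) := by
    rcases a with _ | a
    · simp
    · rcases b with _ | b
      · simp
      · have e1 : a + 1 + (b+1) - 1 = a + b + 1 := by omega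
        have e2 : a + 1 - 1 = a := by omega
        have e3 : b + 1 - 1 = b := by omega
        rw [e1, e2, e3]; ring
  rw [← h1, ← h2, ← h3] at key
  omega

lemma tour_pairs {n : ℕ} {r : Fin n → Fin n → Bool} (h : IsTournament r)
    (S : Finset (Fin n)) :
    ∑ i ∈ S, (S.filter (fun j => r i j = true)).card = S.card.choose 2 := by
  have step1 : ∑ i ∈ S, (S.filter (fun j => r i j = true)).card
      = ∑ p ∈ S ×ˢ S, (if r p.1 p.2 = true then 1 else 0) := by
    rw [Finset.sum_product]
    refine Finset.sum_congr rfl fun i _ => ?_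
    rw [Finset.card_filter]
  have step2 : ∑ p ∈ S ×ˢ S, (if r p.1 p.2 = true then 1 else 0)
      = ∑ p ∈ S.offDiag, (if r p.1 p.2 = true then 1 else 0) := by
    rw [← Finset.diag_union_offDiag S, Finset.sum_union (Finset.disjoint_diag_offDiag S)]
    have : ∑ p ∈ S.diag, (if r p.1 p.2 = true then 1 else 0) = 0 := by
      refine Finset.sum_eq_zero fun p hp => ?_
      rw [Finset.mem_diag] at hp
      simp [hp.2, h.1]
    omega
  have swapinv : ∑ p ∈ S.offDiag, (if r p.1 p.2 = true then 1 else 0)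
      = ∑ p ∈ S.offDiag, (if r p.2 p.1 = true then 1 else 0) := by
    refine Finset.sum_nbij' (fun p => p.swap) (fun p => p.swap) ?_ ?_ ?_ ?_ ?_
    · intro p hp; simp only [Finset.mem_offDiag] at hp ⊢; exact ⟨hp.2.1, hp.1, fun e => hp.2.2 e.symm⟩
    · intro p hp; simp only [Finset.mem_offDiag] at hp ⊢; exact ⟨hp.2.1, hp.1, fun e => hp.2.2 e.symm⟩
    · intro p _; rfl
    · intro p _; rfl
    · intro p _; rfl
  have key : 2 * ∑ p ∈ S.offDiag, (if r p.1 p.2 = true then 1 else 0)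
      = S.card * (S.card - 1) := by
    have : ∑ p ∈ S.offDiag, ((if r p.1 p.2 = true then 1 else 0)
        + (if r p.2 p.1 = true then 1 else 0)) = S.offDiag.card := by
      rw [Finset.card_eq_sum_ones]
      refine Finset.sum_congr rfl fun p hp => ?_
      rw [Finset.mem_offDiag] at hp
      have := h.2 p.1 p.2 hp.2.2
      rcases Bool.eq_false_or_eq_true (r p.1 p.2) with hb | hb <;> simp [hb] at this ⊢ <;> simp [this]
    rw [Finset.sum_add_distrib, ← swapinv] at this
    rw [two_mul, this, Finset.offDiag_card, Nat.mul_sub_one]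
  have := two_mul_choose_two S.card
  omega

lemma sum_score_subset {n : ℕ} {r : Fin n → Fin n → Bool} (h : IsTournament r)
    (S : Finset (Fin n)) : S.card.choose 2 ≤ ∑ i ∈ S, score r i := by
  rw [← tour_pairs h S]
  exact Finset.sum_le_sum fun i _ =>
    Finset.card_le_card (Finset.filter_subset_filter _ (Finset.subset_univ S))

lemma sum_score_univ {n : ℕ} {r : Fin n → Fin n → Bool} (h : IsTournament r) :
    ∑ i : Fin n, score r i = n.choose 2 := by
  have := tour_pairs h (Finset.univ : Finset (Fin n))
  simpa [score, Finset.card_univ] using this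

/-! ### Forward direction -/

lemma landau_forward {n : ℕ} {s : ℕ → ℤ} {r : Fin n → Fin n → Bool}
    (h : IsTournament r) (σ : Equiv.Perm (Fin n))
    (hσ : ∀ i : Fin n, (score r (σ i) : ℤ) = s i.1) :
    (∀ k : ℕ, 1 ≤ k → k ≤ n → (k.choose 2 : ℤ) ≤ ∑ i ∈ Finset.range k, s i) ∧
      ∑ i ∈ Finset.range n, s i = (n.choose 2 : ℤ) := by
  have himg : ∀ k : ℕ, k ≤ n →
      (Finset.univ.filter (fun x : Fin n => x.1 < k)).image Fin.val = Finset.range k := by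
    intro k hk
    ext a
    simp only [Finset.mem_image, Finset.mem_filter, Finset.mem_univ, true_and, Finset.mem_range]
    constructor
    · rintro ⟨x, hx, rfl⟩; exact hx
    · intro ha; exact ⟨⟨a, lt_of_lt_of_le ha hk⟩, ha, rfl⟩
  have main : ∀ k : ℕ, k ≤ n → ∑ i ∈ Finset.range k, s i
      = ∑ y ∈ (Finset.univ.filter (fun x : Fin n => x.1 < k)).image σ, (score r y : ℤ) := by
    intro k hk
    rw [Finset.sum_image (fun a _ b _ hab => σ.injective hab), ← himg k hk,
      Finset.sum_image (fun a _ b _ hab => Fin.val_injective hab)]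
    exact Finset.sum_congr rfl fun x _ => (hσ x).symm
  have hcard : ∀ k : ℕ, k ≤ n →
      ((Finset.univ.filter (fun x : Fin n => x.1 < k)).image σ).card = k := by
    intro k hk
    rw [Finset.card_image_of_injective _ σ.injective,
      ← Finset.card_image_of_injective _ Fin.val_injective, himg k hk, Finset.card_range]
  constructor
  · intro k hk1 hkn
    rw [main k hkn]
    have h1 := sum_score_subset h ((Finset.univ.filter (fun x : Fin n => x.1 < k)).image σ)
    rw [hcard k hkn] at h1
    calc ((k.choose 2 : ℕ) : ℤ)
        ≤ ((∑ i ∈ (Finset.univ.filter (fun x : Fin n => x.1 < k)).image σ, score r i : ℕ) : ℤ) :=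
          Nat.cast_le.mpr h1
      _ = _ := by push_cast; rfl
  · rw [main n le_rfl]
    have huniv : (Finset.univ.filter (fun x : Fin n => x.1 < n)).image σ = Finset.univ := by
      have h2 : Finset.univ.filter (fun x : Fin n => x.1 < n) = Finset.univ :=
        Finset.filter_true_of_mem fun x _ => x.2
      rw [h2]
      exact Finset.image_univ_of_surjective σ.surjective
    rw [huniv, ← Nat.cast_sum, sum_score_univ h]

/-! ### Edge flips -/

def flipE {n : ℕ} (r : Fin n → Fin n → Bool) (a b : Fin n) : Fin n → Fin n → Bool :=
  fun i j => if i = a ∧ j = b then false else if i = b ∧ j = a then true else r i j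

section FlipSec

variable {n : ℕ} {r : Fin n → Fin n → Bool} {a b : Fin n}

lemma flip_ne (ht : IsTournament r) (hab : r a b = true) : a ≠ b := by
  rintro rfl; rw [ht.1 a] at hab; exact Bool.false_ne_true hab

lemma rev_false (ht : IsTournament r) (hab : r a b = true) : r b a = false := by
  have := ht.2 a b (flip_ne ht hab); rw [hab] at this
  simpa using this.symm

lemma flip_tour (ht : IsTournament r) (hab : r a b = true) : IsTournament (flipE r a b) := by
  have hne := flip_ne ht hab
  have hba := rev_false ht hab
  constructor
  · intro i
    by_cases h1 : i = a <;> by_cases h2 : i = b <;> simp_all [flipE, ht.1]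
  · intro i j hij
    by_cases h1 : i = a <;> by_cases h2 : j = b <;> by_cases h3 : i = b <;> by_cases h4 : j = a <;>
      simp_all [flipE] <;>
      first
        | (exact ht.2 _ _ (by assumption))
        | (rw [ht.2 i j hij]; simp)

lemma score_flip_a (ht : IsTournament r) (hab : r a b = true) :
    score (flipE r a b) a = score r a - 1 := by
  have hne := flip_ne ht hab
  have : Finset.univ.filter (fun j => flipE r a b a j = true)
      = (Finset.univ.filter (fun j => r a j = true)).erase b := by
    ext j
    by_cases h1 : j = b <;> simp_all [flipE, hne]
  rw [score, this, Finset.card_erase_of_mem (by simp [hab])]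
  rfl

lemma score_flip_b (ht : IsTournament r) (hab : r a b = true) :
    score (flipE r a b) b = score r b + 1 := by
  have hne := flip_ne ht hab
  have hba := rev_false ht hab
  have : Finset.univ.filter (fun j => flipE r a b b j = true)
      = insert a (Finset.univ.filter (fun j => r b j = true)) := by
    ext j
    by_cases h1 : j = a <;> simp_all [flipE, hne.symm, Ne.symm hne]
  rw [score, this, Finset.card_insert_of_notMem (by simp [hba])]
  rfl

lemma score_flip_other (i : Fin n) (hia : i ≠ a) (hib : i ≠ b) :
    score (flipE r a b) i = score r i := by
  unfold score
  congr 1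
  ext j
  simp [flipE, hia, hib]

lemma score_pos_of_edge (hab : r a b = true) : 1 ≤ score r a := by
  have : b ∈ Finset.univ.filter (fun j => r a j = true) := by simp [hab]
  exact Finset.card_pos.mpr ⟨b, this⟩

end FlipSec

/-! ### Glueing two tournaments -/

lemma score_eq_sum {n : ℕ} (r : Fin n → Fin n → Bool) (i : Fin n) :
    score r i = ∑ j : Fin n, (if r i j = true then 1 else 0) := by
  rw [score, Finset.card_filter]

def glueT {k m : ℕ} (r1 : Fin k → Fin k → Bool) (r2 : Fin m → Fin m → Bool) :
    Fin (k + m) → Fin (k + m) → Bool :=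
  fun i j =>
    if hi : (i : ℕ) < k then
      (if hj : (j : ℕ) < k then r1 ⟨i, hi⟩ ⟨j, hj⟩ else false)
    else
      (if hj : (j : ℕ) < k then true
       else r2 ⟨(i : ℕ) - k, by omega⟩ ⟨(j : ℕ) - k, by omega⟩)

section GlueSec

variable {k m : ℕ} {r1 : Fin k → Fin k → Bool} {r2 : Fin m → Fin m → Bool}

lemma glue_tour (h1 : IsTournament r1) (h2 : IsTournament r2) :
    IsTournament (glueT r1 r2) := by
  constructor
  · intro i
    by_cases hi : (i : ℕ) < k <;> simp [glueT, hi, h1.1, h2.1]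
  · intro i j hij
    by_cases hi : (i : ℕ) < k <;> by_cases hj : (j : ℕ) < k <;>
      simp only [glueT, hi, hj, dif_pos, dif_neg, dite_true, dite_false, not_false_iff]
    · exact h1.2 _ _ (by simp only [ne_eq, Fin.ext_iff]; exact fun e => hij (Fin.ext e))
    · rfl
    · rfl
    · exact h2.2 _ _ (by
        simp only [ne_eq, Fin.ext_iff]
        have : (i : ℕ) ≠ (j : ℕ) := fun e => hij (Fin.ext e)
        omega)

lemma glue_score_low (a : Fin k) :
    score (glueT r1 r2) (Fin.castAdd m a) = score r1 a := by
  rw [score_eq_sum, Fin.sum_univ_add, score_eq_sum]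
  have h2 : ∀ j : Fin m,
      (if glueT r1 r2 (Fin.castAdd m a) (Fin.natAdd k j) = true then 1 else 0) = 0 := by
    intro j; simp [glueT, a.2]
  rw [Finset.sum_congr rfl (fun j _ => h2 j), Finset.sum_const_zero, add_zero]
  refine Finset.sum_congr rfl fun j _ => ?_
  congr 1
  simp [glueT, a.2, j.2]

lemma glue_score_high (b : Fin m) :
    score (glueT r1 r2) (Fin.natAdd k b) = score r2 b + k := by
  rw [score_eq_sum, Fin.sum_univ_add, score_eq_sum]
  have h1 : ∀ j : Fin k,
      (if glueT r1 r2 (Fin.natAdd k b) (Fin.castAdd m j) = true then 1 else 0) = 1 := by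
    intro j; simp [glueT, j.2]
  rw [Finset.sum_congr rfl (fun j _ => h1 j), Finset.sum_const, smul_eq_mul, mul_one,
    Finset.card_univ, Fintype.card_fin]
  rw [add_comm]
  congr 1
  refine Finset.sum_congr rfl fun j _ => ?_
  congr 1
  have hb : ¬ ((Fin.natAdd k b : ℕ) < k) := by simp
  have hj : ¬ ((Fin.natAdd k j : ℕ) < k) := by simp
  rw [glueT, dif_neg hb, dif_neg hj]
  have e1 : (⟨(Fin.natAdd k b : ℕ) - k, by omega⟩ : Fin m) = b := by ext; simp
  have e2 : (⟨(Fin.natAdd k j : ℕ) - k, by omega⟩ : Fin m) = j := by ext; simp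
  rw [e1, e2]

end GlueSec

/-! ### The main construction -/

lemma landau_build : ∀ N : ℕ, ∀ n : ℕ, ∀ s : ℕ → ℤ,
    n * (n + 2) + (s 0).toNat ≤ N →
    (∀ i j : ℕ, i ≤ j → j < n → s i ≤ s j) →
    (∀ k : ℕ, 1 ≤ k → k ≤ n → (k.choose 2 : ℤ) ≤ ∑ i ∈ Finset.range k, s i) →
    (∑ i ∈ Finset.range n, s i = (n.choose 2 : ℤ)) →
    ∃ r : Fin n → Fin n → Bool, IsTournament r ∧
      ∃ σ : Equiv.Perm (Fin n), ∀ i : Fin n, (score r (σ i) : ℤ) = s i.1 := by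
  intro N
  induction N using Nat.strong_induction_on with
  | _ N ih =>
  intro n s hN hmono hL heq
  rcases Nat.lt_or_ge n 2 with hn2 | hn2
  · -- n = 0 or n = 1
    interval_cases n
    · exact ⟨fun a _ => a.elim0, ⟨fun i => i.elim0, fun i _ _ => i.elim0⟩,
        Equiv.refl _, fun i => i.elim0⟩
    · have hs0 : s 0 = 0 := by simpa using heq
      refine ⟨fun _ _ => false, ⟨fun _ => rfl, fun i j hij => absurd (Subsingleton.elim i j) hij⟩,
        Equiv.refl _, fun i => ?_⟩
      have hi0 : (i : ℕ) = 0 := by omega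
      show ((Finset.univ.filter fun j => (false = true)).card : ℤ) = s i.1
      rw [hi0, hs0]; simp
  · by_cases hsplit : ∃ k, 1 ≤ k ∧ k < n ∧ ∑ i ∈ Finset.range k, s i = (k.choose 2 : ℤ)
    · -- partition case
      obtain ⟨k, hk1, hkn, hkeq⟩ := hsplit
      obtain ⟨m, rfl⟩ : ∃ m, n = k + m := ⟨n - k, by omega⟩
      have hm1 : 1 ≤ m := by omega
      set s2 : ℕ → ℤ := fun j => s (k + j) - k with hs2
      have hsum2 : ∀ k', k' ≤ m → ∑ j ∈ Finset.range k', s2 j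
          = (∑ i ∈ Finset.range (k + k'), s i) - (∑ i ∈ Finset.range k, s i) - k * k' := by
        intro k' _
        rw [Finset.sum_range_add]
        have : ∑ j ∈ Finset.range k', s2 j
            = ∑ j ∈ Finset.range k', s (k + j) - ∑ _j ∈ Finset.range k', (k : ℤ) := by
          rw [← Finset.sum_sub_distrib]
        rw [this, Finset.sum_const, Finset.card_range, nsmul_eq_mul]
        ring
      have mono2 : ∀ i j : ℕ, i ≤ j → j < m → s2 i ≤ s2 j := by
        intro i j hij hj
        have := hmono (k + i) (k + j) (by omega) (by omega)
        simp only [hs2]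
        omega
      have hL2 : ∀ k', 1 ≤ k' → k' ≤ m → (k'.choose 2 : ℤ) ≤ ∑ j ∈ Finset.range k', s2 j := by
        intro k' h1 h2
        rw [hsum2 k' h2, hkeq]
        have hA := hL (k + k') (by omega) (by omega)
        have hB := choose_add_two k k'
        push_cast at hA hB ⊢
        linarith
      have heq2 : ∑ j ∈ Finset.range m, s2 j = (m.choose 2 : ℤ) := by
        rw [hsum2 m le_rfl, hkeq, heq]
        have hB := choose_add_two k m
        push_cast at hB ⊢
        linarith
      have hb2 : s2 0 ≤ (m : ℤ) - 1 := by
        have hconst : (m : ℤ) * s2 0 ≤ ∑ j ∈ Finset.range m, s2 j := by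
          calc (m : ℤ) * s2 0 = ∑ _j ∈ Finset.range m, s2 0 := by
                rw [Finset.sum_const, Finset.card_range, nsmul_eq_mul]
            _ ≤ _ := Finset.sum_le_sum fun j hj => mono2 0 j (by omega) (Finset.mem_range.mp hj)
        rw [heq2] at hconst
        have h2c : 2 * (m.choose 2 : ℤ) = (m : ℤ) * ((m : ℤ) - 1) := by
          have := two_mul_choose_two m
          have hcast : ((2 * m.choose 2 : ℕ) : ℤ) = ((m * (m - 1) : ℕ) : ℤ) := by rw [this]
          push_cast [Nat.cast_sub hm1] at hcast
          linarith
        have hch : (0 : ℤ) ≤ (m.choose 2 : ℤ) := Int.natCast_nonneg _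
        have hm0 : (0 : ℤ) < (m : ℤ) := by exact_mod_cast hm1
        have : (m : ℤ) * s2 0 ≤ (m : ℤ) * ((m : ℤ) - 1) := by linarith
        exact le_of_mul_le_mul_left this hm0
      have hprod1 : k * (k + 2) + (s 0).toNat < N := by
        have h1 : k * (k + 2) < (k + m) * (k + m + 2) := by nlinarith
        obtain ⟨A, hA⟩ : ∃ A, A = k * (k + 2) := ⟨_, rfl⟩
        obtain ⟨B, hB⟩ : ∃ B, B = (k + m) * (k + m + 2) := ⟨_, rfl⟩
        rw [← hA, ← hB] at h1
        rw [← hB] at hN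
        rw [← hA]
        omega
      obtain ⟨r1, ht1, σ1, hσ1⟩ := ih (k * (k + 2) + (s 0).toNat) hprod1 k s le_rfl
        (fun i j hij hj => hmono i j hij (by omega))
        (fun k' h1 h2 => hL k' h1 (by omega)) hkeq
      have hprod2 : m * (m + 2) + (s2 0).toNat < N := by
        have h2 : (s2 0).toNat ≤ m - 1 := by omega
        have h1 : m * (m + 2) + (m - 1) < (k + m) * (k + m + 2) := by
          calc m * (m + 2) + (m - 1) ≤ m * (m + 2) + m := by omega
            _ < (1 + m) * (1 + m + 2) := by nlinarith
            _ ≤ (k + m) * (k + m + 2) := Nat.mul_le_mul (by omega) (by omega)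
        obtain ⟨A, hA⟩ : ∃ A, A = m * (m + 2) := ⟨_, rfl⟩
        obtain ⟨B, hB⟩ : ∃ B, B = (k + m) * (k + m + 2) := ⟨_, rfl⟩
        rw [← hA, ← hB] at h1
        rw [← hB] at hN
        rw [← hA]
        omega
      obtain ⟨r2, ht2, σ2, hσ2⟩ := ih (m * (m + 2) + (s2 0).toNat) hprod2 m s2 le_rfl
        mono2 hL2 heq2
      refine ⟨glueT r1 r2, glue_tour ht1 ht2, Equiv.trans (Equiv.trans finSumFinEquiv.symm
        (Equiv.sumCongr σ1 σ2)) finSumFinEquiv, fun i => ?_⟩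
      by_cases hi : (i : ℕ) < k
      · have hsymm : finSumFinEquiv.symm i = Sum.inl ⟨(i : ℕ), hi⟩ := by
          rw [Equiv.symm_apply_eq]; rfl
        rw [Equiv.trans_apply, Equiv.trans_apply, hsymm]
        show ((score (glueT r1 r2) (finSumFinEquiv (Sum.inl (σ1 ⟨(i : ℕ), hi⟩))) : ℕ) : ℤ) = s i.1
        rw [show finSumFinEquiv (Sum.inl (σ1 ⟨(i : ℕ), hi⟩))
            = Fin.castAdd m (σ1 ⟨(i : ℕ), hi⟩) from rfl]
        rw [glue_score_low]
        exact hσ1 ⟨(i : ℕ), hi⟩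
      · have hsymm : finSumFinEquiv.symm i = Sum.inr ⟨(i : ℕ) - k, by omega⟩ := by
          rw [Equiv.symm_apply_eq]; ext; simp; omega
        rw [Equiv.trans_apply, Equiv.trans_apply, hsymm]
        show ((score (glueT r1 r2) (finSumFinEquiv (Sum.inr (σ2 ⟨(i : ℕ) - k, by omega⟩))) : ℕ) : ℤ)
          = s i.1
        rw [show finSumFinEquiv (Sum.inr (σ2 ⟨(i : ℕ) - k, by omega⟩))
            = Fin.natAdd k (σ2 ⟨(i : ℕ) - k, by omega⟩) from rfl]
        rw [glue_score_high]
        have := hσ2 ⟨(i : ℕ) - k, by omega⟩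
        push_cast at this ⊢
        simp only [hs2] at this
        have hik : k + ((i : ℕ) - k) = (i : ℕ) := by omega
        rw [hik] at this
        omega
    · -- strict case
      have hstrict : ∀ k, 1 ≤ k → k < n → (k.choose 2 : ℤ) + 1 ≤ ∑ i ∈ Finset.range k, s i := by
        intro k h1 h2
        have hlt := lt_of_le_of_ne (hL k h1 (le_of_lt h2))
          (fun e => (hsplit ⟨k, h1, h2, e.symm⟩))
        omega
      have hs0 : 1 ≤ s 0 := by
        have := hstrict 1 le_rfl (by omega)
        simpa using this
      set t : ℕ → ℤ := fun i => if i = 0 then s 0 - 1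
        else if i = n - 1 then s (n-1) + 1 else s i with htdef
      have ht0 : t 0 = s 0 - 1 := by simp [htdef]
      have htn : t (n-1) = s (n-1) + 1 := by
        simp only [htdef]
        split_ifs with h1 h2 <;> first | rfl | omega
      have htother : ∀ i, i ≠ 0 → i ≠ n - 1 → t i = s i := by
        intro i h1 h2
        simp only [htdef]
        rw [if_neg h1, if_neg h2]
      have h0j : ∀ j, j < n → s 0 ≤ s j := fun j hj => hmono 0 j (by omega) hj
      have hjn : ∀ i, i < n → s i ≤ s (n-1) := fun i hi => hmono i (n-1) (by omega) (by omega)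
      have mono_t : ∀ i j : ℕ, i ≤ j → j < n → t i ≤ t j := by
        intro i j hij hj
        rcases eq_or_ne j 0 with rfl | hj0
        · have : i = 0 := by omega
          subst this; exact le_rfl
        rcases eq_or_ne i 0 with rfl | hi0
        · rw [ht0]
          rcases eq_or_ne j (n-1) with rfl | hjn1
          · rw [htn]; have := h0j (n-1) (by omega); omega
          · rw [htother j hj0 hjn1]; have := h0j j hj; omega
        rcases eq_or_ne j (n-1) with rfl | hjn1
        · rw [htn]
          rcases eq_or_ne i (n-1) with rfl | hin1
          · rw [htn]
          · rw [htother i hi0 hin1]; have := hjn i (by omega); omega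
        · have hin1 : i ≠ n - 1 := by omega
          rw [htother i hi0 hin1, htother j hj0 hjn1]
          exact hmono i j hij hj
      have hsum_t : ∀ k, 1 ≤ k → k ≤ n → ∑ i ∈ Finset.range k, t i
          = (∑ i ∈ Finset.range k, s i) - 1 + (if n - 1 < k then 1 else 0) := by
        intro k hk1 hkn
        have hterm : ∀ i ∈ Finset.range k, t i
            = s i + ((if i = 0 then (-1 : ℤ) else 0) + (if i = n - 1 then (1 : ℤ) else 0)) := by
          intro i _
          rcases eq_or_ne i 0 with rfl | hi0
          · rw [ht0]
            have h1 : ¬ ((0:ℕ) = n - 1) := by omega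
            simp [h1]; ring
          rcases eq_or_ne i (n-1) with rfl | hin1
          · rw [htn]
            simp [hi0]
          · rw [htother i hi0 hin1]
            simp [hi0, hin1]
        rw [Finset.sum_congr rfl hterm, Finset.sum_add_distrib, Finset.sum_add_distrib,
          Finset.sum_ite_eq' (Finset.range k) 0 (fun _ => (-1 : ℤ)),
          Finset.sum_ite_eq' (Finset.range k) (n-1) (fun _ => (1 : ℤ))]
        rw [if_pos (Finset.mem_range.mpr (by omega : (0:ℕ) < k))]
        simp only [Finset.mem_range]
        split_ifs <;> ring
      have heq_t : ∑ i ∈ Finset.range n, t i = (n.choose 2 : ℤ) := by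
        rw [hsum_t n (by omega) le_rfl, if_pos (by omega), heq]; ring
      have hL_t : ∀ k, 1 ≤ k → k ≤ n → (k.choose 2 : ℤ) ≤ ∑ i ∈ Finset.range k, t i := by
        intro k h1 h2
        rcases eq_or_lt_of_le h2 with rfl | hlt
        · rw [heq_t]
        · rw [hsum_t k h1 h2, if_neg (by omega)]
          have := hstrict k h1 hlt
          omega
      have hmeas : n * (n + 2) + (t 0).toNat < N := by
        obtain ⟨P, hP⟩ : ∃ P, P = n * (n + 2) := ⟨_, rfl⟩
        rw [← hP] at hN ⊢
        rw [ht0]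
        omega
      obtain ⟨r', ht', σ', hσ'⟩ := ih (n * (n + 2) + (t 0).toNat) hmeas n t le_rfl
        mono_t hL_t heq_t
      set i0 : Fin n := ⟨0, by omega⟩ with hi0def
      set i1 : Fin n := ⟨n - 1, by omega⟩ with hi1def
      set u : Fin n := σ' i0 with hudef
      set v : Fin n := σ' i1 with hvdef
      have hu : (score r' u : ℤ) = s 0 - 1 := by
        have h := hσ' i0
        rw [show ((i0 : Fin n) : ℕ) = 0 from rfl, ht0, ← hudef] at h
        exact h
      have hv : (score r' v : ℤ) = s (n-1) + 1 := by
        have h := hσ' i1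
        rw [show ((i1 : Fin n) : ℕ) = n - 1 from rfl, htn, ← hvdef] at h
        exact h
      have hi01 : i0 ≠ i1 := by
        simp only [hi0def, hi1def, ne_eq, Fin.ext_iff]
        omega
      have huv : u ≠ v := fun e => hi01 (σ'.injective e)
      have hother : ∀ i : Fin n, i ≠ i0 → i ≠ i1 → (score r' (σ' i) : ℤ) = s i.1 := by
        intro i h1 h2
        have := hσ' i
        rwa [htother i.1 (fun e => h1 (Fin.ext e)) (fun e => h2 (Fin.ext e))] at this
      have hsv : s 0 ≤ s (n-1) := h0j (n-1) (by omega)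
      have key : ∀ i : Fin n, i ≠ i0 → i ≠ i1 → σ' i ≠ u ∧ σ' i ≠ v := by
        intro i h1 h2
        exact ⟨fun e => h1 (σ'.injective e), fun e => h2 (σ'.injective e)⟩
      by_cases hvu : r' v u = true
      · refine ⟨flipE r' v u, flip_tour ht' hvu, σ', fun i => ?_⟩
        rcases eq_or_ne i i0 with rfl | h1
        · show ((score (flipE r' v u) u : ℕ) : ℤ) = s (i0 : ℕ)
          rw [score_flip_b ht' hvu, show ((i0 : Fin n) : ℕ) = 0 from rfl]
          push_cast
          omega
        rcases eq_or_ne i i1 with rfl | h2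
        · show ((score (flipE r' v u) v : ℕ) : ℤ) = s (i1 : ℕ)
          have hpos := score_pos_of_edge (r := r') hvu
          rw [score_flip_a ht' hvu, show ((i1 : Fin n) : ℕ) = n - 1 from rfl]
          omega
        · obtain ⟨e1, e2⟩ := key i h1 h2
          rw [score_flip_other (σ' i) e2 e1]
          exact hother i h1 h2
      · have hvu' : r' v u = false := by
          simpa only [Bool.not_eq_true] using hvu
        have huve : r' u v = true := by
          have := ht'.2 u v huv
          rw [this, hvu']
          rfl
        have hw : ∃ w, r' v w = true ∧ r' w u = true := by
          by_contra hc
          push_neg at hc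
          have hsub : Finset.univ.filter (fun j => r' v j = true)
              ⊆ Finset.univ.filter (fun j => r' u j = true) := by
            intro w hwmem
            simp only [Finset.mem_filter, Finset.mem_univ, true_and] at hwmem ⊢
            have hq := hc w hwmem
            have hwune : w ≠ u := by
              rintro rfl
              rw [hwmem] at hvu'
              simp at hvu' 
            have hwu0 : r' w u = false := by
              simpa only [Bool.not_eq_true] using hq
            have := ht'.2 u w (Ne.symm hwune)
            rw [this, hwu0]
            rfl
          have hss : Finset.univ.filter (fun j => r' v j = true)
              ⊂ Finset.univ.filter (fun j => r' u j = true) := by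
            refine ⟨hsub, fun hsup => ?_⟩
            have hvmem : v ∈ Finset.univ.filter (fun j => r' u j = true) := by
              simp [huve]
            have := hsup hvmem
            simp [ht'.1 v] at this
          have hcard := Finset.card_lt_card hss
          have : score r' v < score r' u := hcard
          omega
        obtain ⟨w, hvw, hwu⟩ := hw
        have hvwne : v ≠ w := flip_ne ht' hvw
        have hwune : w ≠ u := by
          rintro rfl
          rw [hvw] at hvu'
          exact absurd hvu' (by simp)
        set r1 := flipE r' v w with hr1
        have ht1 : IsTournament r1 := flip_tour ht' hvw
        have h1wu : r1 w u = true := by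
          simp only [hr1, flipE]
          rw [if_neg (by exact fun h => hvwne h.1.symm), if_neg (by exact fun h => huv h.2)]
          exact hwu
        have hscoreu : score (flipE r1 w u) u = score r' u + 1 := by
          rw [score_flip_b ht1 h1wu]
          congr 1
          rw [hr1]
          exact score_flip_other u huv (Ne.symm hwune)
        have hposv : 1 ≤ score r' v := score_pos_of_edge hvw
        have hscorev : (score (flipE r1 w u) v : ℤ) = (score r' v : ℤ) - 1 := by
          rw [score_flip_other v hvwne (Ne.symm huv), hr1, score_flip_a ht' hvw]
          omega
        have hscorew : score (flipE r1 w u) w = score r' w := by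
          rw [score_flip_a ht1 h1wu, hr1, score_flip_b ht' hvw]
          omega
        refine ⟨flipE r1 w u, flip_tour ht1 h1wu, σ', fun i => ?_⟩
        rcases eq_or_ne i i0 with rfl | h1
        · rw [← hudef, hscoreu, show ((i0 : Fin n) : ℕ) = 0 from rfl]
          push_cast
          omega
        rcases eq_or_ne i i1 with rfl | h2
        · rw [← hvdef, hscorev, show ((i1 : Fin n) : ℕ) = n - 1 from rfl]
          omega
        · obtain ⟨e1, e2⟩ := key i h1 h2
          by_cases hxw : σ' i = w
          · rw [hxw, hscorew]
            have h := hother i h1 h2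
            rwa [hxw] at h
          · rw [score_flip_other (σ' i) hxw e1, hr1, score_flip_other (σ' i) e2 hxw]
            exact hother i h1 h2


theorem landau_score_sequence (n : ℕ) (s : ℕ → ℤ)
    (hnn : ∀ i < n, 0 ≤ s i)
    (hmono : ∀ i j : ℕ, i ≤ j → j < n → s i ≤ s j) :
    IsScoreSeq n s ↔
      ((∀ k : ℕ, 1 ≤ k → k ≤ n → (k.choose 2 : ℤ) ≤ ∑ i ∈ Finset.range k, s i) ∧
        ∑ i ∈ Finset.range n, s i = (n.choose 2 : ℤ)) := by
  constructor
  · rintro ⟨r, ht, _, σ, hσ⟩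
    exact landau_forward ht σ hσ
  · rintro ⟨hL, heq⟩
    obtain ⟨r, ht, σ, hσ⟩ := landau_build (n * (n + 2) + (s 0).toNat) n s le_rfl hmono hL heq
    exact ⟨r, ht, fun i j hij => hmono i.1 j.1 hij j.2, σ, hσ⟩
end

section
/- A score sequence (s_1, ..., s_n) of an n-tournament is the score sequence of some strongly connected n-tournament if and only if for all k with 1 ≤ k < n, s_1 + ... + s_k > C(k,2). -/
open Finset

/-! ### Auxiliary lemmas -/

lemma aux_card_filter_lt (n k : ℕ) (hk : k ≤ n) :
    (univ.filter (fun i : Fin n => i.1 < k)).card = k := by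
  rw [← Finset.card_range k]
  refine Finset.card_bij' (fun i _ => i.1)
    (fun j hj => (⟨j, lt_of_lt_of_le (Finset.mem_range.mp hj) hk⟩ : Fin n)) ?_ ?_ ?_ ?_
  · intro a ha; simpa using (Finset.mem_filter.mp ha).2
  · intro a ha; simpa using Finset.mem_range.mp ha
  · intro a ha; rfl
  · intro a ha; rfl

/-- Edges inside a set of a tournament: exactly one per pair. -/
lemma aux_inner_count {n : ℕ} {r : Fin n → Fin n → Bool} (hT : IsTournament r)
    (A : Finset (Fin n)) :
    ∑ v ∈ A, (A.filter (fun w => r v w = true)).card = A.card.choose 2 := by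
  obtain ⟨hirr, hone⟩ := hT
  set S := ∑ v ∈ A, (A.filter (fun w => r v w = true)).card with hS
  have h2 : 2 * S = A.card * A.card - A.card := by
    have hdouble : 2 * S = ∑ v ∈ A, ∑ w ∈ A,
        ((if r v w = true then 1 else 0) + (if r w v = true then 1 else 0)) := by
      rw [hS]
      simp only [Finset.sum_add_distrib, Finset.card_filter]
      rw [two_mul]
      congr 1
      exact Finset.sum_comm
    have hpt : ∀ v ∈ A, ∀ w ∈ A,
        ((if r v w = true then 1 else 0) + (if r w v = true then 1 else 0)) =
          (if v = w then 0 else 1) := by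
      intro v _ w _
      by_cases hvw : v = w
      · subst hvw; simp [hirr v]
      · have := hone v w hvw
        rcases Bool.eq_false_or_eq_true (r w v) with h | h <;> simp [this, h, hvw]
    rw [hdouble,
      Finset.sum_congr rfl (fun v hv => Finset.sum_congr rfl (fun w hw => hpt v hv w hw))]
    have hsplit : ((∑ v ∈ A, ∑ w ∈ A, if v = w then 0 else 1) : ℕ) +
        (∑ v ∈ A, ∑ w ∈ A, if v = w then 1 else 0) = A.card * A.card := by
      rw [← Finset.sum_add_distrib]
      simp only [← Finset.sum_add_distrib]
      have : ∀ v w : Fin n, ((if v = w then (0:ℕ) else 1) + if v = w then 1 else 0) = 1 := by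
        intro v w; by_cases h : v = w <;> simp [h]
      simp [this, Finset.sum_const, mul_comm]
    have hdiag : ((∑ v ∈ A, ∑ w ∈ A, if v = w then 1 else 0) : ℕ) = A.card := by
      have : ∀ v ∈ A, ((∑ w ∈ A, if v = w then 1 else 0) : ℕ) = 1 := by
        intro v hv
        rw [Finset.sum_ite_eq A v (fun _ => (1:ℕ))]
        simp [hv]
      rw [Finset.sum_congr rfl this]
      simp
    omega
  rw [Nat.choose_two_right]
  have hm : A.card * (A.card - 1) = A.card * A.card - A.card := by
    cases A.card with
    | zero => simp
    | succ m => simp [Nat.mul_succ, Nat.succ_mul, Nat.mul_sub]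
  omega

lemma aux_score_split {n : ℕ} {r : Fin n → Fin n → Bool} (hT : IsTournament r)
    (A : Finset (Fin n)) :
    ∑ v ∈ A, score r v =
      A.card.choose 2 + ∑ v ∈ A, ((Aᶜ).filter (fun w => r v w = true)).card := by
  have hsc : ∀ v : Fin n, score r v =
      (A.filter (fun w => r v w = true)).card + ((Aᶜ).filter (fun w => r v w = true)).card := by
    intro v
    rw [score, ← Finset.card_union_of_disjoint
      (Finset.disjoint_filter_filter (disjoint_compl_right)), ← Finset.filter_union,
      Finset.union_compl]
  rw [Finset.sum_congr rfl (fun v _ => hsc v), Finset.sum_add_distrib,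
    aux_inner_count hT A]

/-- A set with no outgoing edges absorbs reachability. -/
lemma aux_closed {n : ℕ} {r : Fin n → Fin n → Bool} {A : Finset (Fin n)}
    (hcl : ∀ v ∈ A, ∀ w, w ∉ A → r v w ≠ true) {x y : Fin n}
    (hx : x ∈ A) (hxy : Relation.ReflTransGen (fun a b => r a b = true) x y) : y ∈ A := by
  induction hxy with
  | refl => exact hx
  | tail _ e ih =>
      by_contra hc
      exact hcl _ ih _ hc e

lemma aux_range_sum {n k : ℕ} (hk : k ≤ n) (s : ℕ → ℤ) :
    ∑ i ∈ univ.filter (fun i : Fin n => i.1 < k), s i.1 = ∑ i ∈ Finset.range k, s i := by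
  refine Finset.sum_bij' (fun i _ => i.1)
    (fun j hj => (⟨j, lt_of_lt_of_le (Finset.mem_range.mp hj) hk⟩ : Fin n)) ?_ ?_ ?_ ?_ ?_
  · intro a ha; simpa using (Finset.mem_filter.mp ha).2
  · intro a ha; simpa using Finset.mem_range.mp ha
  · intro a ha; rfl
  · intro a ha; rfl
  · intro a ha; rfl

/-- Prefix sums of the sorted score sequence count scores over the image of an index set. -/
lemma aux_prefix {n k : ℕ} (hk : k ≤ n) (s : ℕ → ℤ) (r : Fin n → Fin n → Bool)
    (σ : Equiv.Perm (Fin n)) (hσ : ∀ i : Fin n, (score r (σ i) : ℤ) = s i.1) :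
    ∑ i ∈ Finset.range k, s i =
      ((∑ v ∈ (univ.filter (fun i : Fin n => i.1 < k)).image σ, score r v : ℕ) : ℤ) := by
  rw [← aux_range_sum hk s]
  rw [Finset.sum_image (fun x _ y _ h => σ.injective h)]
  push_cast
  exact (Finset.sum_congr rfl (fun i _ => (hσ i).symm))

theorem strong_score_sequence (n : ℕ) (s : ℕ → ℤ) (h : IsScoreSeq n s) :
    (∃ r : Fin n → Fin n → Bool, IsTournament r ∧ IsStrong r ∧ IsScoreSeqOf s r) ↔
      (∀ k : ℕ, 1 ≤ k → k < n → (k.choose 2 : ℤ) < ∑ i ∈ Finset.range k, s i) := by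
  constructor
  · rintro ⟨r, hT, hStr, hmono, σ, hσ⟩ k hk1 hkn
    set B : Finset (Fin n) := univ.filter (fun i : Fin n => i.1 < k) with hB
    set A : Finset (Fin n) := B.image σ with hA
    have hcardB : B.card = k := aux_card_filter_lt n k hkn.le
    have hcardA : A.card = k := by
      rw [hA, Finset.card_image_of_injective _ σ.injective, hcardB]
    -- there is an edge leaving A
    have hcross : ∃ v ∈ A, ∃ w, w ∉ A ∧ r v w = true := by
      by_contra hc
      push_neg at hc
      have hAne : A.Nonempty := Finset.card_pos.mp (by omega)
      obtain ⟨v₀, hv₀⟩ := hAne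
      have hAnu : ∃ w₀ : Fin n, w₀ ∉ A := by
        by_contra hall
        push_neg at hall
        have : (univ : Finset (Fin n)).card ≤ A.card :=
          Finset.card_le_card (fun x _ => hall x)
        simp [hcardA] at this
        omega
      obtain ⟨w₀, hw₀⟩ := hAnu
      exact hw₀ (aux_closed (fun v hv w hw hrvw => hc v hv w hw hrvw) hv₀ (hStr v₀ w₀))
    obtain ⟨v₁, hv₁, w₁, hw₁, hrv₁⟩ := hcross
    have hsplit := aux_score_split hT A
    have hpos : 1 ≤ ∑ v ∈ A, ((Aᶜ).filter (fun w => r v w = true)).card := by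
      calc 1 ≤ ((Aᶜ).filter (fun w => r v₁ w = true)).card := by
              refine Finset.card_pos.mpr ⟨w₁, ?_⟩
              simp [hrv₁, hw₁]
           _ ≤ _ := Finset.single_le_sum
              (f := fun v => ((Aᶜ).filter (fun w => r v w = true)).card)
              (fun _ _ => Nat.zero_le _) hv₁
    have hpre := aux_prefix hkn.le s r σ hσ
    rw [← hB, ← hA] at hpre
    rw [hpre]
    have hfin : k.choose 2 < ∑ v ∈ A, score r v := by rw [hsplit, hcardA]; omega
    exact_mod_cast hfin
  · intro hlt
    obtain ⟨r, hT, hmono, σ, hσ⟩ := h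
    refine ⟨r, hT, ?_, hmono, σ, hσ⟩
    intro i j
    by_contra hpath
    classical
    set A : Finset (Fin n) := univ.filter
      (fun v => Relation.ReflTransGen (fun a b => r a b = true) i v) with hAdef
    have hiA : i ∈ A := by simp only [hAdef, Finset.mem_filter, Finset.mem_univ, true_and]; exact Relation.ReflTransGen.refl
    have hjA : j ∉ A := by simp [hAdef]; exact hpath
    have hcl : ∀ v ∈ A, ∀ w, w ∉ A → r v w ≠ true := by
      intro v hv w hw hr
      refine hw ?_
      simp only [hAdef, Finset.mem_filter, Finset.mem_univ, true_and] at hv ⊢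
      exact hv.tail hr
    set k : ℕ := A.card with hk
    have hk1 : 1 ≤ k := Finset.card_pos.mpr ⟨i, hiA⟩
    have hkn : k < n := by
      have hssub : A ⊂ univ :=
        Finset.ssubset_univ_iff.mpr (fun hAu => hjA (by rw [hAu]; exact Finset.mem_univ j))
      simpa using Finset.card_lt_card hssub
    -- scores inside A are < k, scores outside are ≥ k
    have hlow : ∀ v ∈ A, score r v < k := by
      intro v hv
      have hsub : univ.filter (fun w => r v w = true) ⊆ A.erase v := by
        intro w hw
        simp only [Finset.mem_filter, Finset.mem_univ, true_and] at hw
        refine Finset.mem_erase.mpr ⟨?_, ?_⟩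
        · intro hwv; rw [hwv, hT.1 v] at hw; exact Bool.false_ne_true hw
        · by_contra hwA
          exact hcl v hv w hwA hw
      calc score r v ≤ (A.erase v).card := Finset.card_le_card hsub
        _ = k - 1 := by rw [Finset.card_erase_of_mem hv]
        _ < k := by omega
    have hhigh : ∀ w, w ∉ A → k ≤ score r w := by
      intro w hw
      have hsub : A ⊆ univ.filter (fun u => r w u = true) := by
        intro v hv
        simp only [Finset.mem_filter, Finset.mem_univ, true_and]
        have hvw : v ≠ w := fun hvw => hw (hvw ▸ hv)
        have hfalse : r v w = false := by
          rcases Bool.eq_false_or_eq_true (r v w) with hb | hb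
          · exact absurd hb (hcl v hv w hw)
          · exact hb
        have := hT.2 v w hvw
        rw [hfalse] at this
        simpa using this.symm
      exact Finset.card_le_card hsub
    -- all indices < k have s value < k
    set P : Finset (Fin n) := univ.filter (fun i : Fin n => s i.1 < (k : ℤ)) with hPdef
    have hkP : k ≤ P.card := by
      rw [hk]
      refine Finset.card_le_card_of_injOn (fun v => σ.symm v) ?_ ?_
      · intro v hv
        simp only [hPdef, Finset.mem_coe, Finset.mem_filter, Finset.mem_univ, true_and]
        rw [← hσ (σ.symm v), Equiv.apply_symm_apply]
        exact_mod_cast hlow v hv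
      · exact fun a _ b _ hab => σ.symm.injective hab
    have hallP : ∀ i : Fin n, i.1 < k → i ∈ P := by
      intro i₀ hi₀
      by_contra hiP
      have hPsub : P ⊆ univ.filter (fun j : Fin n => j.1 < i₀.1) := by
        intro p hp
        simp only [Finset.mem_filter, Finset.mem_univ, true_and]
        by_contra hple
        push_neg at hple
        refine hiP ?_
        simp only [hPdef, Finset.mem_filter, Finset.mem_univ, true_and] at hp ⊢
        exact lt_of_le_of_lt (hmono i₀ p (by rwa [Fin.le_def])) hp
      have := Finset.card_le_card hPsub
      rw [aux_card_filter_lt n i₀.1 i₀.2.le] at this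
      omega
    -- σ maps the first k indices onto A
    set B : Finset (Fin n) := univ.filter (fun i : Fin n => i.1 < k) with hBdef
    have himg : B.image σ = A := by
      have hsub : B.image σ ⊆ A := by
        intro v hv
        obtain ⟨i₁, hi₁, rfl⟩ := Finset.mem_image.mp hv
        simp only [hBdef, Finset.mem_filter, Finset.mem_univ, true_and] at hi₁
        by_contra hvA
        have h1 : (k : ℤ) ≤ (score r (σ i₁) : ℤ) := by exact_mod_cast hhigh _ hvA
        have h2 : s i₁.1 < (k : ℤ) := by
          have := hallP i₁ hi₁
          simpa [hPdef] using this
        rw [hσ i₁] at h1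
        omega
      refine Finset.eq_of_subset_of_card_le hsub ?_
      rw [Finset.card_image_of_injective _ σ.injective, aux_card_filter_lt n k hkn.le, ← hk]
    -- no edges leave A, so the prefix sum is exactly (k choose 2)
    have hzero : ∑ v ∈ A, ((Aᶜ).filter (fun w => r v w = true)).card = 0 := by
      refine Finset.sum_eq_zero (fun v hv => ?_)
      rw [Finset.card_eq_zero]
      refine Finset.filter_eq_empty_iff.mpr (fun w hw => ?_)
      exact hcl v hv w (by simpa using hw)
    have hsum : ∑ v ∈ A, score r v = k.choose 2 := by
      rw [aux_score_split hT A, hzero, ← hk]; omega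
    have hpre := aux_prefix hkn.le s r σ hσ
    rw [← hBdef, himg, hsum] at hpre
    have := hlt k hk1 hkn
    rw [hpre] at this
    exact lt_irrefl _ this
end

section
/- Let (s_1,...,s_n) be a non-decreasing integer sequence satisfying Landau's conditions (partial sums at least C(k,2), total sum equal to C(n,2)) that is not the regular (n odd) or nearly-regular (n even) sequence. Let p be the largest index with s_1 = ... = s_p and q the smallest index with s_q = ... = s_n (so p < q). Then the sequence obtained by replacing s_p with s_p + 1 and s_q with s_q - 1 is still non-decreasing and satisfies Landau's conditions. -/
open Finset

theorem algorithm_step_preserves_landau (n : ℕ) (s : ℕ → ℤ)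
    (hmono : ∀ i j : ℕ, i ≤ j → j < n → s i ≤ s j)
    (hL1 : ∀ k : ℕ, 1 ≤ k → k ≤ n → (k.choose 2 : ℤ) ≤ ∑ i ∈ Finset.range k, s i)
    (hL2 : ∑ i ∈ Finset.range n, s i = (n.choose 2 : ℤ))
    (hnotreg : ∃ i < n, s i ≠ regSeq n i)
    (p q : ℕ) (hpq : p < q) (hqn : q < n)
    (hpconst : ∀ i ≤ p, s i = s 0) (hplt : s p < s (p + 1))
    (hqconst : ∀ i, q ≤ i → i < n → s i = s q) (hqgt : s (q - 1) < s q)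
    (s' : ℕ → ℤ)
    (hs' : ∀ i, s' i = if i = p then s p + 1 else if i = q then s q - 1 else s i) :
    (∀ i j : ℕ, i ≤ j → j < n → s' i ≤ s' j) ∧
    (∀ k : ℕ, 1 ≤ k → k ≤ n → (k.choose 2 : ℤ) ≤ ∑ i ∈ Finset.range k, s' i) ∧
    ∑ i ∈ Finset.range n, s' i = (n.choose 2 : ℤ) := by
  have hn2 : 2 ≤ n := by omega
  have hq1 : 1 ≤ q := by omega
  -- double of choose 2
  have hch : (2 : ℤ) * (n.choose 2 : ℤ) = n * (n - 1) := by
    obtain ⟨c, hc⟩ : Even (n * (n - 1)) := by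
      rcases Nat.even_or_odd n with he | ho
      · exact he.mul_right _
      · exact (Nat.Odd.sub_odd ho odd_one).mul_left _
    have h : 2 * n.choose 2 = n * (n - 1) := by
      rw [Nat.choose_two_right]; omega
    zify [show 1 ≤ n by omega] at h
    linarith
  -- the gap lemma
  have hgap : s p + 2 ≤ s q := by
    by_contra hcon
    push_neg at hcon
    have hpq1 : s p + 1 ≤ s q := by
      have h1 : s (p + 1) ≤ s q := hmono _ _ (by omega) hqn
      omega
    have hsqval : s q = s p + 1 := by omega
    have hqp1 : q = p + 1 := by
      by_contra h
      have h1 : s (p + 1) ≤ s (q - 1) := hmono _ _ (by omega) (by omega)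
      omega
    set a := s p with ha
    have hlow : ∀ i < q, s i = a := by
      intro i hi
      rw [hpconst i (by omega), ← hpconst p le_rfl]
    have hhigh : ∀ i, q ≤ i → i < n → s i = a + 1 := by
      intro i h1 h2
      rw [hqconst i h1 h2, hsqval]
    have hsum : ∑ i ∈ Finset.range n, s i = q * a + (n - q : ℕ) * (a + 1) := by
      rw [Finset.range_eq_Ico, ← Finset.sum_Ico_consecutive _ (Nat.zero_le q) hqn.le]
      have e1 : ∑ i ∈ Finset.Ico 0 q, s i = q * a := by
        rw [Finset.sum_congr rfl (fun i hi => hlow i (by simp at hi; omega))]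
        rw [Finset.sum_const, Nat.card_Ico, nsmul_eq_mul]
        norm_num
      have e2 : ∑ i ∈ Finset.Ico q n, s i = (n - q : ℕ) * (a + 1) := by
        rw [Finset.sum_congr rfl (fun i hi => by
          simp only [Finset.mem_Ico] at hi
          exact hhigh i hi.1 hi.2)]
        rw [Finset.sum_const, Nat.card_Ico, nsmul_eq_mul]
      rw [e1, e2]
    rw [hsum] at hL2
    -- now derive 2*q = n and 2*a = n-2
    have hc : (q : ℤ) * a + ((n : ℤ) - q) * (a + 1) = (n.choose 2 : ℤ) := by
      rw [← hL2]
      have : ((n - q : ℕ) : ℤ) = (n : ℤ) - q := by omega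
      rw [this]
    have hkey : 2 * (q : ℤ) = (n : ℤ) * (2 * a + 3 - n) := by
      nlinarith [hc, hch]
    have hNpos : (0 : ℤ) < n := by positivity
    have hm1 : 1 ≤ 2 * a + 3 - (n : ℤ) := by
      by_contra h
      push_neg at h
      have : (n : ℤ) * (2 * a + 3 - n) ≤ 0 :=
        mul_nonpos_of_nonneg_of_nonpos hNpos.le (by omega)
      omega
    have hm2 : 2 * a + 3 - (n : ℤ) ≤ 1 := by
      by_contra h
      push_neg at h
      have : (n : ℤ) * 2 ≤ (n : ℤ) * (2 * a + 3 - n) :=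
        mul_le_mul_of_nonneg_left (by omega) hNpos.le
      omega
    have hmeq : 2 * a + 3 - (n : ℤ) = 1 := le_antisymm hm2 hm1
    have h2q : 2 * (q : ℤ) = n := by rw [hkey, hmeq]; ring
    have h2a : 2 * a = (n : ℤ) - 2 := by omega
    have hqn2 : 2 * q = n := by exact_mod_cast h2q
    have hneven : ¬ Odd n := Nat.not_odd_iff_even.mpr ⟨q, by omega⟩
    obtain ⟨i, hi, hne⟩ := hnotreg
    apply hne
    unfold regSeq
    rw [if_neg hneven]
    have hn2q : n / 2 = q := by omega
    rw [hn2q]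
    by_cases hiq : i < q
    · rw [if_pos hiq, hlow i hiq]; omega
    · rw [if_neg hiq, hhigh i (by omega) hi]; omega
  have h1 : s p + 1 ≤ s (p + 1) := by omega
  have hqm1 : s (q - 1) + 1 ≤ s q := by omega
  refine ⟨?_, ?_, ?_⟩
  · -- monotonicity
    intro i j hij hjn
    rw [hs' i, hs' j]
    by_cases hip : i = p
    · subst hip
      rw [if_pos rfl]
      by_cases hjp : j = i
      · rw [if_pos hjp]
      · rw [if_neg hjp]
        by_cases hjq : j = q
        · rw [if_pos hjq]; omega
        · rw [if_neg hjq]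
          have h2 : s (i + 1) ≤ s j := hmono _ _ (by omega) hjn
          omega
    · rw [if_neg hip]
      by_cases hiq : i = q
      · subst hiq
        rw [if_pos rfl]
        by_cases hjp : j = p
        · omega
        · rw [if_neg hjp]
          by_cases hjq : j = i
          · rw [if_pos hjq]
          · rw [if_neg hjq, hqconst j (by omega) hjn]
            omega
      · rw [if_neg hiq]
        by_cases hjp : j = p
        · subst hjp
          rw [if_pos rfl]
          rw [hpconst i hij, ← hpconst j le_rfl]
          omega
        · rw [if_neg hjp]
          by_cases hjq : j = q
          · subst hjq
            rw [if_pos rfl]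
            have h2 : s i ≤ s (j - 1) := hmono _ _ (by omega) (by omega)
            omega
          · rw [if_neg hjq]
            exact hmono _ _ hij hjn
  all_goals {
    have key : ∀ k, ∑ i ∈ Finset.range k, s' i =
        (∑ i ∈ Finset.range k, s i) + (if p ∈ Finset.range k then (1 : ℤ) else 0)
          - (if q ∈ Finset.range k then (1 : ℤ) else 0) := by
      intro k
      have hfun : ∀ i, s' i = s i + (if i = p then (1 : ℤ) else 0)
          - (if i = q then (1 : ℤ) else 0) := by
        intro i
        rw [hs' i]
        by_cases h1 : i = p <;> by_cases h2 : i = q <;> simp [h1, h2] <;> omega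
      simp_rw [hfun]
      rw [Finset.sum_sub_distrib, Finset.sum_add_distrib,
        Finset.sum_ite_eq' (Finset.range k) p (fun _ => (1 : ℤ)),
        Finset.sum_ite_eq' (Finset.range k) q (fun _ => (1 : ℤ))]
    first
    | · -- partial sums
        intro k hk1 hkn
        rw [key k]
        have := hL1 k hk1 hkn
        simp only [Finset.mem_range]
        split_ifs <;> omega
    | · -- total sum
        rw [key n]
        simp only [Finset.mem_range]
        rw [if_pos (by omega), if_pos hqn]
        omega
  }
end

section
/- Let n be odd, R_n the constant sequence with all n entries equal to (n-1)/2, S a non-decreasing integer sequence of length n satisfying Landau's conditions with S ≠ R_n, p the largest index with s_1 = ... = s_p, and q the smallest index with s_q = ... = s_n. Let S' be obtained from S by replacing s_p with s_p+1 and s_q with s_q-1. Then d(S', R_n) = d(S, R_n) - 2, where d denotes the L1 distance. -/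
open Finset

theorem algorithm_step_decreases_distance (n : ℕ) (hodd : Odd n) (s : ℕ → ℤ)
    (hmono : ∀ i j : ℕ, i ≤ j → j < n → s i ≤ s j)
    (hL1 : ∀ k : ℕ, 1 ≤ k → k ≤ n → (k.choose 2 : ℤ) ≤ ∑ i ∈ Finset.range k, s i)
    (hL2 : ∑ i ∈ Finset.range n, s i = (n.choose 2 : ℤ))
    (hne : ∃ i < n, s i ≠ ((n : ℤ) - 1) / 2)
    (p q : ℕ) (hpq : p < q) (hqn : q < n)
    (hpconst : ∀ i ≤ p, s i = s 0) (hplt : s p < s (p + 1))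
    (hqconst : ∀ i, q ≤ i → i < n → s i = s q) (hqgt : s (q - 1) < s q)
    (s' : ℕ → ℤ)
    (hs' : ∀ i, s' i = if i = p then s p + 1 else if i = q then s q - 1 else s i) :
    ∑ i ∈ Finset.range n, |s' i - ((n : ℤ) - 1) / 2|
      = (∑ i ∈ Finset.range n, |s i - ((n : ℤ) - 1) / 2|) - 2 := by

  set m : ℤ := ((n : ℤ) - 1) / 2 with hm
  obtain ⟨k, hk⟩ := hodd
  have hpn : p < n := lt_trans hpq hqn
  have hmval : m = (k : ℤ) := by
    rw [hm, hk]; push_cast; omega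
  have hsum : ∑ i ∈ Finset.range n, s i = n * m := by
    rw [hL2, hmval, hk]
    have : (2 * k + 1).choose 2 = (2 * k + 1) * k := by
      rw [Nat.choose_two_right, Nat.add_sub_cancel, Nat.mul_div_assoc _ ⟨k, rfl⟩,
        Nat.mul_div_cancel_left k (by norm_num)]
    rw [this]; push_cast; ring
  -- s p is the minimum, s q is the maximum
  have hmin : ∀ i < n, s p ≤ s i := by
    intro i hi
    rcases le_or_gt i p with h | h
    · rw [hpconst i h, ← hpconst p le_rfl]
    · exact hmono p i h.le hi
  have hmax : ∀ i < n, s i ≤ s q := by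
    intro i hi
    rcases le_or_gt i q with h | h
    · exact hmono i q h hqn
    · rw [hqconst i h.le hi]
  have hpq' : s p < s q := lt_of_lt_of_le hplt (hmono (p+1) q hpq hqn)
  -- s p < m
  have hplow : s p + 1 ≤ m := by
    by_contra h
    push_neg at h
    have hge : m ≤ s p := by omega
    have : ∑ i ∈ Finset.range n, m < ∑ i ∈ Finset.range n, s i := by
      apply Finset.sum_lt_sum
      · intro i hi
        exact le_trans hge (hmin i (Finset.mem_range.mp hi))
      · exact ⟨q, Finset.mem_range.mpr hqn, lt_of_le_of_lt hge hpq'⟩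
    rw [hsum, Finset.sum_const, Finset.card_range, nsmul_eq_mul] at this
    omega
  -- s q > m
  have hqhigh : m + 1 ≤ s q := by
    by_contra h
    push_neg at h
    have hle : s q ≤ m := by omega
    have : ∑ i ∈ Finset.range n, s i < ∑ i ∈ Finset.range n, m := by
      apply Finset.sum_lt_sum
      · intro i hi
        exact le_trans (hmax i (Finset.mem_range.mp hi)) hle
      · exact ⟨p, Finset.mem_range.mpr hpn, lt_of_lt_of_le hpq' hle⟩
    rw [hsum, Finset.sum_const, Finset.card_range, nsmul_eq_mul] at this
    omega
  have key : ∀ i ∈ Finset.range n,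
      |s' i - m| = |s i - m| + ((if i = p then (-1:ℤ) else 0) + (if i = q then (-1:ℤ) else 0)) := by
    intro i hi
    rw [hs' i]
    rcases eq_or_ne i p with rfl | hip
    · have hiq : i ≠ q := Nat.ne_of_lt hpq
      simp only [if_pos rfl, if_neg hiq, eq_self_iff_true, if_true]
      rw [abs_of_nonpos (by omega), abs_of_nonpos (by omega)]
      ring
    · rcases eq_or_ne i q with rfl | hiq
      · simp only [if_neg hip, if_pos rfl, eq_self_iff_true, if_true]
        rw [abs_of_nonneg (by omega), abs_of_nonneg (by omega)]
        ring
      · simp [hip, hiq]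
  rw [Finset.sum_congr rfl key, Finset.sum_add_distrib, Finset.sum_add_distrib,
    Finset.sum_ite_eq' (Finset.range n) p (fun _ => (-1:ℤ)),
    Finset.sum_ite_eq' (Finset.range n) q (fun _ => (-1:ℤ)),
    if_pos (Finset.mem_range.mpr hpn), if_pos (Finset.mem_range.mpr hqn)]
  ring
end

section
/- If T' is a strongly connected n-tournament with non-decreasing score sequence (s_1',...,s_n') and 1 ≤ p < q ≤ n are indices with s_{p-1}' < s_p' (or p = 1) and s_q' < s_{q+1}' (or q = n), then there exists an n-tournament whose score sequence is obtained from (s_1',...,s_n') by decreasing the p-th entry by 1 and increasing the q-th entry by 1 (after the entries remain non-decreasing). -/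
open Finset

open List in
lemma exists_nodup_chain' {α : Type*} {r : α → α → Prop} :
    ∀ (N : ℕ) (L : List α), L.length ≤ N → List.Chain' r L →
    ∃ L' : List α, List.Chain' r L' ∧ L'.Nodup ∧ L'.head? = L.head? ∧ L'.getLast? = L.getLast? := by
  intro N
  induction N with
  | zero =>
    intro L hL _
    refine ⟨L, ?_, ?_, rfl, rfl⟩ <;> simp [List.Chain', List.length_eq_zero_iff.mp (Nat.le_zero.mp hL)]
  | succ N ih =>
    intro L hL hc
    by_cases hnd : L.Nodup
    · exact ⟨L, hc, hnd, rfl, rfl⟩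
    · obtain ⟨x, hx⟩ := List.exists_duplicate_iff_not_nodup.mpr hnd
      have hsub : [x, x] <+ L := List.duplicate_iff_sublist.mp hx
      rw [List.cons_sublist_iff] at hsub
      obtain ⟨r₁, r₂, rfl, hx1, h2⟩ := hsub
      rw [List.singleton_sublist] at h2
      obtain ⟨s, s', rfl⟩ := List.append_of_mem hx1
      obtain ⟨u', v, rfl⟩ := List.append_of_mem h2
      have hre : (s ++ x :: s') ++ (u' ++ x :: v) = s ++ x :: ((s' ++ u') ++ x :: v) := by simp
      rw [hre] at hc hL ⊢
      set u := s' ++ u' with hu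
      have hc1 : List.Chain' r (s ++ [x]) ∧ List.Chain' r (x :: (u ++ x :: v)) :=
        (List.isChain_split).mp hc
      have hc2 : List.Chain' r (x :: v) := by
        have := (List.isChain_split (l₁ := x :: u) (c := x) (l₂ := v)).mp (by simpa [List.Chain'] using hc1.2)
        exact this.2
      have hc' : List.Chain' r (s ++ x :: v) :=
        (List.isChain_split).mpr ⟨hc1.1, hc2⟩
      have hlen : (s ++ x :: v).length ≤ N := by
        simp only [List.length_append, List.length_cons] at hL ⊢
        omega
      obtain ⟨L', hL'c, hL'nd, hh, hg⟩ := ih _ hlen hc'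
      refine ⟨L', hL'c, hL'nd, ?_, ?_⟩
      · rw [hh]
        cases s <;> simp
      · rw [hg]
        rw [List.getLast?_append_cons, show s ++ x :: (u ++ x :: v) = (s ++ x :: u) ++ x :: v by simp, List.getLast?_append_cons]

lemma reverse_path {n : ℕ} (r : Fin n → Fin n → Bool) (ht : IsTournament r)
    (a b : Fin n) (hab : a ≠ b)
    (hreach : Relation.ReflTransGen (fun x y => r x y = true) a b) :
    ∃ r' : Fin n → Fin n → Bool, IsTournament r' ∧ ∀ v : Fin n,
      (score r' v : ℤ) = (score r v : ℤ)
        + (if v = b then 1 else 0) - (if v = a then 1 else 0) := by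
  classical
  obtain ⟨l, hl1, hl2⟩ := List.exists_isChain_cons_of_relationReflTransGen hreach
  obtain ⟨L, hLc, hLnd, hLh, hLg⟩ :=
    exists_nodup_chain' (a :: l).length (a :: l) le_rfl (hl1 : List.Chain' _ (a :: l))
  have hLh' : L.head? = some a := by simpa using hLh
  have hLg' : L.getLast? = some b := by
    rw [hLg, List.getLast?_eq_getLast (List.cons_ne_nil _ _), hl2]
  set N := L.length with hN
  set f : ℕ → Fin n := fun k => L.getD k a with hf
  have hNpos : 0 < N := by
    rcases L with _ | ⟨c, L⟩
    · simp at hLh'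
    · simp [hN]
  have hgetf : ∀ k (hk : k < N), f k = L.get ⟨k, hk⟩ := by
    intro k hk
    simp [hf, List.getD_eq_getElem?_getD, List.getElem?_eq_getElem hk]
  have hf_mem : ∀ k, k < N → f k ∈ L := by
    intro k hk; rw [hgetf k hk]; exact L.get_mem _
  have hf_inj : ∀ k j, k < N → j < N → f k = f j → k = j := by
    intro k j hk hj hkj
    rw [hgetf k hk, hgetf j hj] at hkj
    have := List.nodup_iff_injective_get.mp hLnd hkj
    exact Fin.mk.inj_iff.mp this
  have hedge : ∀ k, k + 1 < N → r (f k) (f (k + 1)) = true := by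
    intro k hk
    rw [hgetf k (by omega), hgetf (k + 1) hk]
    exact List.isChain_iff_getElem.mp hLc k hk
  have hfa : f 0 = a := by
    rw [hgetf 0 hNpos]
    rcases L with _ | ⟨c, L⟩
    · simp at hLh'
    · simpa using hLh'
  have hfb : f (N - 1) = b := by
    rw [hgetf (N - 1) (by omega)]
    rw [List.getLast?_eq_getLast (List.length_pos_iff.mp hNpos), Option.some_inj] at hLg'
    rw [← hLg']
    simp [hN, List.getLast_eq_getElem, List.get_eq_getElem]
  have hN2 : 2 ≤ N := by
    by_contra h
    have : N = 1 := by omega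
    exact hab (by rw [← hfa, ← hfb, this])
  -- the flip predicate
  set flipB : Fin n → Fin n → Bool := fun x y =>
    (List.range (N - 1)).any fun k =>
      ((f k == x && f (k + 1) == y) || (f k == y && f (k + 1) == x)) with hflipB
  have hflip_iff : ∀ x y, flipB x y = true ↔
      ∃ k, k + 1 < N ∧ ((f k = x ∧ f (k + 1) = y) ∨ (f k = y ∧ f (k + 1) = x)) := by
    intro x y
    simp only [hflipB, List.any_eq_true, List.mem_range, Bool.or_eq_true, Bool.and_eq_true,
      beq_iff_eq]
    constructor
    · rintro ⟨k, hk, h⟩; exact ⟨k, by omega, h⟩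
    · rintro ⟨k, hk, h⟩; exact ⟨k, by omega, h⟩
  have hflip_symm : ∀ x y, flipB x y = flipB y x := by
    intro x y
    rw [Bool.eq_iff_iff, hflip_iff, hflip_iff]
    constructor <;> (rintro ⟨k, hk, h⟩; exact ⟨k, hk, h.symm⟩)
  have hflip_irrefl : ∀ x, flipB x x = false := by
    intro x
    rw [← Bool.not_eq_true, hflip_iff]
    rintro ⟨k, hk, (⟨h1, h2⟩ | ⟨h1, h2⟩)⟩ <;>
      exact absurd (hf_inj k (k + 1) (by omega) hk (h1.trans h2.symm)) (by omega)
  set r' : Fin n → Fin n → Bool := fun x y => xor (flipB x y) (r x y) with hr'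
  have htourn' : IsTournament r' := by
    constructor
    · intro i; simp [hr', hflip_irrefl, ht.1]
    · intro i j hij
      simp only [hr', hflip_symm i j, ht.2 i j hij]
      cases flipB j i <;> cases r j i <;> rfl
  refine ⟨r', htourn', ?_⟩
  have hchar : ∀ j, j < N → ∀ y, flipB (f j) y = true ↔
      ((j + 1 < N ∧ y = f (j + 1)) ∨ (0 < j ∧ y = f (j - 1))) := by
    intro j hj y
    rw [hflip_iff]
    constructor
    · rintro ⟨k, hk, (⟨h1, h2⟩ | ⟨h1, h2⟩)⟩
      · have : k = j := hf_inj k j (by omega) hj h1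
        subst this
        exact Or.inl ⟨hk, h2.symm⟩
      · have : k + 1 = j := hf_inj (k + 1) j hk hj h2
        exact Or.inr ⟨by omega, by rw [← h1]; congr 1; omega⟩
    · rintro (⟨h1, h2⟩ | ⟨h1, h2⟩)
      · exact ⟨j, h1, Or.inl ⟨rfl, h2.symm⟩⟩
      · exact ⟨j - 1, by omega, Or.inr ⟨h2.symm, by congr 1; omega⟩⟩
  have hnotmem : ∀ v, v ∉ L → ∀ y, flipB v y = false := by
    intro v hv y
    rw [← Bool.not_eq_true, hflip_iff]
    rintro ⟨k, hk, (⟨h1, _⟩ | ⟨_, h2⟩)⟩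
    · exact hv (h1 ▸ hf_mem k (by omega))
    · exact hv (h2 ▸ hf_mem (k + 1) hk)
  -- backward edge is absent
  have hback : ∀ j, j < N → 0 < j → r (f j) (f (j - 1)) = false := by
    intro j hj h0
    have hne : f j ≠ f (j - 1) := fun h => absurd (hf_inj j (j - 1) hj (by omega) h) (by omega)
    have he : r (f (j - 1)) (f j) = true := by
      have := hedge (j - 1) (by omega)
      rwa [show j - 1 + 1 = j by omega] at this
    rw [ht.2 _ _ hne, he]
    rfl
  intro v
  by_cases hv : v ∈ L
  · obtain ⟨⟨j, hj⟩, hjv⟩ := List.mem_iff_get.mp hv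
    have hjv : f j = v := by rw [hgetf j hj]; exact hjv
    have hva : v = a ↔ j = 0 := by
      constructor
      · intro h; exact hf_inj j 0 hj hNpos (by rw [hjv, hfa, h])
      · intro h; rw [← hjv, h, hfa]
    have hvb : v = b ↔ j = N - 1 := by
      constructor
      · intro h; exact hf_inj j (N - 1) hj (by omega) (by rw [hjv, hfb, h])
      · intro h; rw [← hjv, h, hfb]
    subst hjv
    have hxor : ∀ x y : Fin n, r' x y = true ↔ ¬(flipB x y = true ↔ r x y = true) := by
      intro x y
      cases h1 : flipB x y <;> cases h2 : r x y <;> simp [hr', h1, h2]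
    have hmemS' : ∀ y : Fin n, r' (f j) y = true ↔
        ¬(((j + 1 < N ∧ y = f (j + 1)) ∨ (0 < j ∧ y = f (j - 1))) ↔ r (f j) y = true) := by
      intro y
      rw [hxor, hchar j hj y]
    by_cases hj0 : j = 0
    · -- head of the path : v = a
      subst hj0
      have hone : (1 : ℕ) < N := by omega
      have hfwd : r (f 0) (f 1) = true := hedge 0 hone
      have claim : Finset.univ.filter (fun y => r' (f 0) y = true) =
          (Finset.univ.filter (fun y => r (f 0) y = true)).erase (f 1) := by
        ext y
        simp only [Finset.mem_filter, Finset.mem_erase, Finset.mem_univ, true_and]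
        rw [hmemS' y]
        by_cases hy : y = f 1
        · subst hy
          simp [hone, hfwd]
        · simp [hy]
      have hmem1 : f 1 ∈ Finset.univ.filter (fun y => r (f 0) y = true) := by
        simp [hfwd]
      have key : score r' (f 0) + 1 = score r (f 0) := by
        unfold score
        rw [claim]
        exact Finset.card_erase_add_one hmem1
      have hva' : f 0 = a := hva.mpr rfl
      have hvb' : ¬ (f 0 = b) := by rw [hva']; exact hab
      rw [if_neg hvb', if_pos hva']
      omega
    · by_cases hjN : j = N - 1
      · -- end of the path : v = b
        have h0j : 0 < j := by omega
        have hnolast : ¬ (j + 1 < N) := by omega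
        have hbackj : r (f j) (f (j - 1)) = false := hback j hj h0j
        have claim : Finset.univ.filter (fun y => r' (f j) y = true) =
            insert (f (j - 1)) (Finset.univ.filter (fun y => r (f j) y = true)) := by
          ext y
          simp only [Finset.mem_filter, Finset.mem_insert, Finset.mem_univ, true_and]
          rw [hmemS' y]
          by_cases hy : y = f (j - 1)
          · subst hy
            simp [hnolast, h0j, hbackj]
          · simp [hy, hnolast]
        have hnm : f (j - 1) ∉ Finset.univ.filter (fun y => r (f j) y = true) := by
          simp [hbackj]
        have key : score r' (f j) = score r (f j) + 1 := by
          unfold score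
          rw [claim, Finset.card_insert_of_notMem hnm]
        have hvb' : f j = b := hvb.mpr hjN
        have hva' : ¬ (f j = a) := by rw [hvb']; exact fun h => hab h.symm
        rw [if_pos hvb', if_neg hva']
        omega
      · -- interior vertex
        have h0j : 0 < j := by omega
        have hj1 : j + 1 < N := by omega
        have hfwd : r (f j) (f (j + 1)) = true := hedge j hj1
        have hbackj : r (f j) (f (j - 1)) = false := hback j hj h0j
        have hne2 : f (j - 1) ≠ f (j + 1) := fun h =>
          absurd (hf_inj (j - 1) (j + 1) (by omega) hj1 h) (by omega)
        have claim : Finset.univ.filter (fun y => r' (f j) y = true) =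
            insert (f (j - 1))
              ((Finset.univ.filter (fun y => r (f j) y = true)).erase (f (j + 1))) := by
          ext y
          simp only [Finset.mem_filter, Finset.mem_insert, Finset.mem_erase, Finset.mem_univ,
            true_and]
          rw [hmemS' y]
          by_cases hy1 : y = f (j + 1)
          · subst hy1
            simp [hj1, hfwd, hne2.symm]
          · by_cases hy2 : y = f (j - 1)
            · subst hy2
              simp [h0j, hbackj]
            · simp [hy1, hy2]
        have hmem1 : f (j + 1) ∈ Finset.univ.filter (fun y => r (f j) y = true) := by
          simp [hfwd]
        have hnm : f (j - 1) ∉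
            (Finset.univ.filter (fun y => r (f j) y = true)).erase (f (j + 1)) := by
          simp [hbackj]
        have key : score r' (f j) = score r (f j) := by
          unfold score
          rw [claim, Finset.card_insert_of_notMem hnm]
          have := Finset.card_erase_add_one hmem1
          omega
        have hva' : ¬ (f j = a) := fun h => absurd (hva.mp h) (by omega)
        have hvb' : ¬ (f j = b) := fun h => absurd (hvb.mp h) (by omega)
        rw [key, if_neg hvb', if_neg hva']
        ring
  · have hva : v ≠ a := fun h => hv (h ▸ (hfa ▸ hf_mem 0 hNpos))
    have hvb : v ≠ b := fun h => hv (h ▸ (hfb ▸ hf_mem (N - 1) (by omega)))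
    have : score r' v = score r v := by
      unfold score
      congr 1
      apply Finset.filter_congr
      intro y _
      simp [hr', hnotmem v hv y]
    simp [this, hva, hvb]

theorem strong_gives_previous_score_sequence (n : ℕ) (r : Fin n → Fin n → Bool)
    (ht : IsTournament r) (hstrong : IsStrong r)
    (s : ℕ → ℤ) (hs : IsScoreSeqOf s r)
    (p q : ℕ) (hpq : p < q) (hqn : q < n)
    (hp : p = 0 ∨ s (p - 1) < s p)
    (hq : q = n - 1 ∨ s q < s (q + 1)) :
    IsScoreSeq n (fun i => if i = p then s p - 1 else if i = q then s q + 1 else s i) := by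
  obtain ⟨hmono, σ, hσ⟩ := hs
  have hpn : p < n := lt_trans hpq hqn
  have mono' : ∀ x y : ℕ, x < n → y < n → x ≤ y → s x ≤ s y := fun x y hx hy h =>
    hmono ⟨x, hx⟩ ⟨y, hy⟩ h
  set a := σ ⟨p, hpn⟩ with ha
  set b := σ ⟨q, hqn⟩ with hb
  have hab : a ≠ b := by
    intro h
    have := σ.injective h
    exact absurd (Fin.mk.inj_iff.mp this) (Nat.ne_of_lt hpq)
  obtain ⟨r', ht', hsc⟩ := reverse_path r ht a b hab (hstrong a b)
  refine ⟨r', ht', ?_, σ, ?_⟩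
  · intro i j hij
    have hij' : i.1 ≤ j.1 := hij
    dsimp only
    by_cases hip : i.1 = p
    · rw [if_pos hip]
      by_cases hjp : j.1 = p
      · rw [if_pos hjp]
      · by_cases hjq : j.1 = q
        · rw [if_neg hjp, if_pos hjq]
          have := mono' p q hpn hqn hpq.le
          omega
        · rw [if_neg hjp, if_neg hjq]
          have := mono' p j.1 hpn j.isLt (hip ▸ hij')
          omega
    · by_cases hiq : i.1 = q
      · rw [if_neg hip, if_pos hiq]
        by_cases hjq : j.1 = q
        · have hjp : ¬ j.1 = p := by omega
          rw [if_neg hjp, if_pos hjq]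
        · have hjgt : q < j.1 := lt_of_le_of_ne (hiq ▸ hij') (fun h => hjq h.symm)
          have hjp : ¬ j.1 = p := by omega
          rw [if_neg hjp, if_neg hjq]
          rcases hq with h | h
          · exact absurd j.isLt (by omega)
          · have := mono' (q + 1) j.1 (by omega) j.isLt (by omega)
            omega
      · rw [if_neg hip, if_neg hiq]
        by_cases hjp : j.1 = p
        · have hilt : i.1 < p := lt_of_le_of_ne (hjp ▸ hij') hip
          rw [if_pos hjp]
          rcases hp with h | h
          · exact absurd hilt (by omega)
          · have := mono' i.1 (p - 1) (by omega) (by omega) (by omega)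
            omega
        · by_cases hjq : j.1 = q
          · rw [if_neg hjp, if_pos hjq]
            have := mono' i.1 q (by omega) hqn (hjq ▸ hij')
            omega
          · rw [if_neg hjp, if_neg hjq]
            exact mono' i.1 j.1 i.isLt j.isLt hij'
  · intro i
    have hia : σ i = a ↔ i.1 = p := by
      rw [ha, EmbeddingLike.apply_eq_iff_eq, Fin.ext_iff]
    have hib : σ i = b ↔ i.1 = q := by
      rw [hb, EmbeddingLike.apply_eq_iff_eq, Fin.ext_iff]
    rw [hsc (σ i), hσ i]
    dsimp only
    by_cases hip : i.1 = p
    · rw [if_pos (hia.mpr hip), if_neg (fun h => absurd (hib.mp h) (by omega)), if_pos hip, hip]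
      ring
    · by_cases hiq : i.1 = q
      · rw [if_neg (fun h => absurd (hia.mp h) (by omega)), if_pos (hib.mpr hiq),
          if_neg hip, if_pos hiq, hiq]
        ring
      · rw [if_neg (fun h => absurd (hia.mp h) (by omega)),
          if_neg (fun h => absurd (hib.mp h) (by omega)), if_neg hip, if_neg hiq]
        ring
end

section
/- Every non-decreasing integer sequence (s_1,...,s_n) satisfying s_1+...+s_k ≥ C(k,2) for all 1 ≤ k ≤ n and s_1+...+s_n = C(n,2) is the score sequence of some n-tournament (sufficiency direction of Landau's theorem). -/
open Finset

def rev {n : ℕ} (r : Fin n → Fin n → Bool) (x y : Fin n) : Fin n → Fin n → Bool :=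
  fun i j => if i = x ∧ j = y then false else if i = y ∧ j = x then true else r i j

lemma rev_tournament {n : ℕ} {r : Fin n → Fin n → Bool} (hr : IsTournament r)
    {x y : Fin n} (hxy : r x y = true) : IsTournament (rev r x y) := by
  have hne : x ≠ y := by rintro rfl; rw [hr.1 x] at hxy; simp at hxy
  constructor
  · intro i
    simp only [rev]
    rcases eq_or_ne i x with rfl | hix
    · simp [hne, hne.symm, hr.1]
    · rcases eq_or_ne i y with rfl | hiy
      · simp [hne.symm, hr.1]
      · simp [hix, hiy, hr.1]
  · intro i j hij
    simp only [rev]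
    by_cases h1 : i = x ∧ j = y
    · obtain ⟨rfl, rfl⟩ := h1
      simp [hij, Ne.symm hij]
    · by_cases h2 : i = y ∧ j = x
      · obtain ⟨rfl, rfl⟩ := h2
        simp [hij, Ne.symm hij]
      · rw [if_neg h1, if_neg h2, if_neg (fun h : j = x ∧ i = y => h2 ⟨h.2, h.1⟩),
          if_neg (fun h : j = y ∧ i = x => h1 ⟨h.2, h.1⟩)]
        exact hr.2 i j hij

lemma score_rev_fst {n : ℕ} {r : Fin n → Fin n → Bool} (hr : IsTournament r)
    {x y : Fin n} (hxy : r x y = true) : score (rev r x y) x + 1 = score r x := by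
  have hne : x ≠ y := by rintro rfl; rw [hr.1 x] at hxy; simp at hxy
  have h : (univ.filter (fun j => rev r x y x j = true)) = (univ.filter (fun j => r x j = true)).erase y := by
    ext j
    rcases eq_or_ne j y with rfl | hj
    · simp [rev]
    · simp [rev, hj, hne, hne.symm]
  have hy : y ∈ univ.filter (fun j => r x j = true) := by simp [hxy]
  rw [score, h, Finset.card_erase_of_mem hy, score]
  have h1 : 1 ≤ (univ.filter (fun j => r x j = true)).card := Finset.card_pos.mpr ⟨y, hy⟩
  omega

lemma score_rev_snd {n : ℕ} {r : Fin n → Fin n → Bool} (hr : IsTournament r)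
    {x y : Fin n} (hxy : r x y = true) : score (rev r x y) y = score r y + 1 := by
  have hne : x ≠ y := by rintro rfl; rw [hr.1 x] at hxy; simp at hxy
  have hyx : r y x = false := by rw [hr.2 y x hne.symm, hxy]; rfl
  have h : (univ.filter (fun j => rev r x y y j = true)) = insert x (univ.filter (fun j => r y j = true)) := by
    ext j
    rcases eq_or_ne j x with rfl | hj
    · simp [rev, hne.symm]
    · simp [rev, hj, hne.symm]
  rw [score, h, Finset.card_insert_of_notMem (by simp [hyx]), score]

lemma score_rev_other {n : ℕ} {r : Fin n → Fin n → Bool}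
    {x y z : Fin n} (hzx : z ≠ x) (hzy : z ≠ y) : score (rev r x y) z = score r z := by
  unfold score
  congr 1
  ext j
  simp [rev, hzx, hzy]

lemma exists_flip {n : ℕ} (r : Fin n → Fin n → Bool) (hr : IsTournament r) (u v : Fin n)
    (huv : score r v < score r u) :
    ∃ r', IsTournament r' ∧ score r' u + 1 = score r u ∧ score r' v = score r v + 1 ∧
      ∀ w, w ≠ u → w ≠ v → score r' w = score r w := by
  have hne : u ≠ v := by rintro rfl; omega
  by_cases huv2 : r u v = true
  · exact ⟨rev r u v, rev_tournament hr huv2, score_rev_fst hr huv2,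
      score_rev_snd hr huv2, fun w hw1 hw2 => score_rev_other hw1 hw2⟩
  · have hvu : r v u = true := by
      have h := hr.2 u v hne
      cases h2 : r v u <;> simp [h2] at h <;> simp_all
    have hw : ∃ w, r u w = true ∧ r w v = true := by
      by_contra hcon
      push_neg at hcon
      have hsub : (univ.filter (fun j => r u j = true)) ⊆ (univ.filter (fun j => r v j = true)) := by
        intro j hj
        simp only [mem_filter, mem_univ, true_and] at hj ⊢
        have hjv : j ≠ v := by rintro rfl; exact huv2 hj
        have h3 := hcon j hj
        have h2 := hr.2 j v hjv
        cases h4 : r v j <;> simp [h4] at h2 <;> simp_all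
      have := Finset.card_le_card hsub
      unfold score at huv
      omega
    obtain ⟨w, hw1, hw2⟩ := hw
    have hwu : w ≠ u := by rintro rfl; rw [hr.1] at hw1; simp at hw1
    have hwv : w ≠ v := by rintro rfl; rw [hr.1] at hw2; simp at hw2
    have hr1t : IsTournament (rev r u w) := rev_tournament hr hw1
    have hr1wv : (rev r u w) w v = true := by
      simp only [rev]
      simp [hwu, hwv, Ne.symm hwu, hne, hw2]
    refine ⟨rev (rev r u w) w v, rev_tournament hr1t hr1wv, ?_, ?_, ?_⟩
    · rw [score_rev_other (Ne.symm hwu) hne, score_rev_fst hr hw1]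
    · rw [score_rev_snd hr1t hr1wv, score_rev_other (Ne.symm hne) (Ne.symm hwv)]
    · intro z hzu hzv
      by_cases hzw : z = w
      · subst hzw
        have h1 := score_rev_fst hr1t hr1wv
        have h2 := score_rev_snd hr hw1
        omega
      · rw [score_rev_other hzw hzv, score_rev_other hzu hzw]

lemma choose2_succ (k : ℕ) : ((k+1).choose 2 : ℤ) = (k.choose 2 : ℤ) + k := by
  push_cast [Nat.choose_succ_succ, Nat.choose_one_right]; ring

lemma mono_of_adj {n : ℕ} (f : ℕ → ℤ) (h : ∀ i, i + 1 < n → f i ≤ f (i+1)) :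
    ∀ i j, i ≤ j → j < n → f i ≤ f j := by
  intro i j hij hjn
  induction j with
  | zero => have : i = 0 := Nat.le_zero.mp hij; subst this; exact le_refl _
  | succ j ih =>
    rcases Nat.lt_or_ge i (j+1) with h1 | h1
    · exact le_trans (ih (by omega) (by omega)) (h j hjn)
    · have : i = j+1 := by omega
      subst this; exact le_refl _

lemma score_transitive {n : ℕ} (i : Fin n) :
    score (fun i j : Fin n => decide (j < i)) i = i.1 := by
  unfold score
  simp only [decide_eq_true_eq]
  rw [show (univ.filter (fun j : Fin n => j < i)) = Finset.Iio i by ext j; simp, Fin.card_Iio]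

theorem landau_aux (n : ℕ) (P : ℕ) : ∀ (s : ℕ → ℤ),
    (∀ i j : ℕ, i ≤ j → j < n → s i ≤ s j) →
    (∀ k : ℕ, 1 ≤ k → k ≤ n → (k.choose 2 : ℤ) ≤ ∑ i ∈ Finset.range k, s i) →
    (∑ i ∈ Finset.range n, s i = (n.choose 2 : ℤ)) →
    ((P : ℤ) = ∑ k ∈ Finset.range n, (∑ i ∈ Finset.range k, s i - (k.choose 2 : ℤ))) →
    ∃ r : Fin n → Fin n → Bool, IsTournament r ∧
      ∃ σ : Equiv.Perm (Fin n), ∀ i : Fin n, (score r (σ i) : ℤ) = s i.1 := by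
  induction P using Nat.strong_induction_on with
  | _ P IH =>
  intro s hmono hL1 hL2 hP
  set S : ℕ → ℤ := fun k => ∑ i ∈ Finset.range k, s i with hSdef
  set c : ℕ → ℤ := fun k => (k.choose 2 : ℤ) with hcdef
  have hSsucc : ∀ k, S (k+1) = S k + s k := fun k => Finset.sum_range_succ s k
  have hcsucc : ∀ k, c (k+1) = c k + k := fun k => choose2_succ k
  have hS0 : S 0 = 0 := Finset.sum_range_zero s
  have hc0 : c 0 = 0 := by simp [hcdef]
  have hL0 : ∀ k, k ≤ n → c k ≤ S k := by
    intro k hk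
    rcases Nat.eq_zero_or_pos k with rfl | hk1
    · rw [hS0, hc0]
    · exact hL1 k hk1 hk
  by_cases hall : ∀ k ∈ Finset.range n, S k = c k
  · -- base case: s k = k, transitive tournament
    have hsk : ∀ k, k < n → s k = k := by
      intro k hk
      have h1 : S k = c k := hall k (mem_range.mpr hk)
      have h2 : S (k+1) = c (k+1) := by
        rcases Nat.lt_or_ge (k+1) n with h | h
        · exact hall (k+1) (mem_range.mpr h)
        · have : k + 1 = n := by omega
          rw [this]; exact hL2
      have h3 := hSsucc k
      have h4 := hcsucc k
      linarith
    refine ⟨fun i j => decide (j < i), ⟨?_, ?_⟩, Equiv.refl _, ?_⟩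
    · intro i; simp
    · intro i j hij
      rcases lt_trichotomy i j with h | h | h
      · simp [h, asymm h]
      · exact absurd h hij
      · simp [h, asymm h]
    · intro i
      simp only [Equiv.refl_apply]
      rw [score_transitive, hsk i.1 i.2]
  · -- inductive step
    push_neg at hall
    obtain ⟨ks, hksmem, hksne⟩ := hall
    rw [mem_range] at hksmem
    have hks1 : 1 ≤ ks := by
      rcases Nat.eq_zero_or_pos ks with rfl | h
      · exact absurd (hS0.trans hc0.symm) hksne
      · exact h
    have hstar : c ks + 1 ≤ S ks := by
      have := hL0 ks (le_of_lt hksmem)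
      omega
    -- find a (last equality point below ks)
    have h0mem : 0 ∈ (range ks).filter (fun k => S k = c k) := by
      simp only [mem_filter, mem_range]
      exact ⟨hks1, hS0.trans hc0.symm⟩
    have hE0ne : ((range ks).filter (fun k => S k = c k)).Nonempty := ⟨0, h0mem⟩
    obtain ⟨a, haE0, hamax⟩ : ∃ a, a ∈ (range ks).filter (fun k => S k = c k) ∧
        ∀ k ∈ (range ks).filter (fun k => S k = c k), k ≤ a :=
      ⟨_, Finset.max'_mem _ hE0ne, fun k hk => Finset.le_max' _ k hk⟩
    rw [mem_filter, mem_range] at haE0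
    obtain ⟨haks, haeq⟩ := haE0
    -- find k1 (first equality point above ks)
    have hnmem : n ∈ (Finset.Icc (ks+1) n).filter (fun k => S k = c k) := by
      simp only [mem_filter, Finset.mem_Icc]
      exact ⟨⟨by omega, le_refl n⟩, hL2⟩
    have hE1ne : ((Finset.Icc (ks+1) n).filter (fun k => S k = c k)).Nonempty := ⟨n, hnmem⟩
    obtain ⟨k1, hk1E1, hk1min⟩ : ∃ k1, k1 ∈ (Finset.Icc (ks+1) n).filter (fun k => S k = c k) ∧
        ∀ k ∈ (Finset.Icc (ks+1) n).filter (fun k => S k = c k), k1 ≤ k :=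
      ⟨_, Finset.min'_mem _ hE1ne, fun k hk => Finset.min'_le _ k hk⟩
    rw [mem_filter, Finset.mem_Icc] at hk1E1
    obtain ⟨⟨hk1gt, hk1le⟩, hk1eq⟩ := hk1E1
    set b := k1 - 1 with hbdef
    have hb1 : b + 1 = k1 := by omega
    have hab : a < b := by omega
    have hbn : b < n := by omega
    have han : a < n := by omega
    have hstrict : ∀ k, a < k → k ≤ b → c k + 1 ≤ S k := by
      intro k h1 h2
      have hkn : k ≤ n := by omega
      have hge := hL0 k hkn
      rcases eq_or_ne (S k) (c k) with heq | hne2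
      · exfalso
        rcases Nat.lt_or_ge k ks with hlt | hge2
        · have := hamax k (by simp only [mem_filter, mem_range]; exact ⟨hlt, heq⟩)
          omega
        · rcases Nat.eq_or_lt_of_le hge2 with rfl | hgt
          · omega
          · have := hk1min k (by simp only [mem_filter, Finset.mem_Icc]; exact ⟨⟨hgt, hkn⟩, heq⟩)
            omega
      · omega
    have hSb1eq : S (b+1) = c (b+1) := by rw [hb1]; exact hk1eq
    -- bounds on s near a and b
    have hsa_lb : (a:ℤ) + 1 ≤ s a := by
      have h1 := hstrict (a+1) (by omega) (by omega)
      have h2 := hSsucc a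
      have h3 := hcsucc a
      linarith
    have hsa_prev : 1 ≤ a → s (a-1) ≤ (a:ℤ) - 1 := by
      intro ha1
      obtain ⟨a', rfl⟩ : ∃ a', a = a' + 1 := ⟨a - 1, by omega⟩
      have h1 := hL0 a' (by omega)
      have h2 := hSsucc a'
      have h3 := hcsucc a'
      simp only [Nat.add_sub_cancel]
      push_cast
      linarith
    have hsb_ub : s b ≤ (b:ℤ) - 1 := by
      have h1 := hstrict b (by omega) (le_refl b)
      have h2 := hSsucc b
      have h3 := hcsucc b
      linarith
    have hsb1_lb : b + 1 < n → (b:ℤ) + 1 ≤ s (b+1) := by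
      intro hbn2
      have h1 := hL0 (b+2) (by omega)
      have h2 := hSsucc (b+1)
      have h3 := hcsucc (b+1)
      push_cast at h3 ⊢
      linarith
    -- the modified sequence
    set s' : ℕ → ℤ := fun i => s i + (if i = a then -1 else 0) + (if i = b then 1 else 0)
      with hs'def
    have hs'a : s' a = s a - 1 := by
      simp [hs'def, hab.ne, sub_eq_add_neg]
    have hs'b : s' b = s b + 1 := by
      simp [hs'def, hab.ne']
    have hs'o : ∀ i, i ≠ a → i ≠ b → s' i = s i := by
      intro i h1 h2; simp only [hs'def]; rw [if_neg h1, if_neg h2]; ring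
    have hS' : ∀ k, ∑ i ∈ Finset.range k, s' i
        = S k + (if a < k then -1 else 0) + (if b < k then 1 else 0) := by
      intro k
      simp only [hs'def]
      rw [Finset.sum_add_distrib, Finset.sum_add_distrib]
      congr 1
      · congr 1
        rw [Finset.sum_ite_eq' (Finset.range k) a (fun _ => (-1 : ℤ))]
        simp [mem_range]
      · rw [Finset.sum_ite_eq' (Finset.range k) b (fun _ => (1 : ℤ))]
        simp [mem_range]
    have hmono' : ∀ i j : ℕ, i ≤ j → j < n → s' i ≤ s' j := by
      apply mono_of_adj
      intro i hi2
      by_cases hia1 : i + 1 = a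
      · have h0 : s' i = s i := hs'o i (by omega) (by omega)
        have h1 : s' (i+1) = s a - 1 := by rw [hia1, hs'a]
        rw [h0, h1]
        have h2 : s i ≤ (a:ℤ) - 1 := by
          have h4 := hsa_prev (by omega)
          have h3 : a - 1 = i := by omega
          rwa [h3] at h4
        linarith [hsa_lb]
      · by_cases hia : i = a
        · subst hia
          rw [hs'a]
          by_cases hib1 : i + 1 = b
          · rw [hib1, hs'b]
            have := hmono i b (by omega) hbn
            linarith
          · rw [hs'o (i+1) (by omega) hib1]
            have := hmono i (i+1) (by omega) hi2
            linarith
        · by_cases hib : i = b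
          · have h0 : s' i = s b + 1 := by rw [hib, hs'b]
            have h3 : s' (i+1) = s (i+1) := hs'o (i+1) (by omega) (by omega)
            rw [h0, h3]
            have h1 := hsb1_lb (by omega : b + 1 < n)
            have h4 : i + 1 = b + 1 := by omega
            rw [h4]
            linarith [hsb_ub]
          · by_cases hib1 : i + 1 = b
            · rw [hs'o i hia hib, hib1, hs'b]
              have := hmono i b (by omega) hbn
              linarith
            · rw [hs'o i hia hib, hs'o (i+1) hia1 hib1]
              exact hmono i (i+1) (by omega) hi2
    have hL1' : ∀ k : ℕ, 1 ≤ k → k ≤ n → c k ≤ ∑ i ∈ Finset.range k, s' i := by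
      intro k h1 h2
      rw [hS' k]
      have h3 := hL0 k h2
      split_ifs with ha2 hb2 hb2
      · linarith
      · have := hstrict k ha2 (by omega)
        linarith
      · omega
      · linarith
    have hL2' : ∑ i ∈ Finset.range n, s' i = c n := by
      rw [hS' n, if_pos han, if_pos hbn]
      have h3 : S n = c n := hL2
      linarith
    -- new potential
    have key : ∀ m : ℕ, m < n → ∑ k ∈ Finset.range n, (if m < k then (1:ℤ) else 0)
        = ((n - (m+1) : ℕ) : ℤ) := by
      intro m hm
      rw [Finset.sum_boole]
      have h4 : (range n).filter (fun k => m < k) = Finset.Ico (m+1) n := by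
        ext x; simp only [mem_filter, mem_range, Finset.mem_Ico]; omega
      rw [h4, Nat.card_Ico]
    have hPd : ∑ k ∈ Finset.range n, (∑ i ∈ Finset.range k, s' i - c k)
        = (P : ℤ) - ((b : ℤ) - a) := by
      have h5 : ∀ k ∈ Finset.range n, ∑ i ∈ Finset.range k, s' i - c k
          = (S k - c k) + ((if a < k then (-1:ℤ) else 0) + (if b < k then (1:ℤ) else 0)) := by
        intro k _
        rw [hS' k]; ring
      rw [Finset.sum_congr rfl h5, Finset.sum_add_distrib, Finset.sum_add_distrib]
      have e1 : ∑ k ∈ Finset.range n, (if a < k then (-1:ℤ) else 0)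
          = -((n - (a+1) : ℕ) : ℤ) := by
        rw [show (fun k => if a < k then (-1:ℤ) else 0) = (fun k => -(if a < k then (1:ℤ) else 0))
          from funext fun k => by split_ifs <;> ring]
        rw [Finset.sum_neg_distrib, key a han]
      have e2 := key b hbn
      rw [e1, e2, ← hP]
      have hc1 : a + 1 ≤ n := han
      have hc2 : b + 1 ≤ n := hbn
      omega
    have hnn' : 0 ≤ (P:ℤ) - ((b:ℤ) - a) := by
      rw [← hPd]
      apply Finset.sum_nonneg
      intro k hk
      rcases Nat.eq_zero_or_pos k with rfl | hk1
      · simp [hc0]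
      · have := hL1' k hk1 (le_of_lt (mem_range.mp hk))
        linarith
    have hP'lt : P - (b - a) < P := by omega
    have hP'cast : ((P - (b - a) : ℕ) : ℤ) = ∑ k ∈ Finset.range n, (∑ i ∈ Finset.range k, s' i - c k) := by
      rw [hPd]; omega
    obtain ⟨r', hr't, σ', hσ'⟩ := IH (P - (b - a)) hP'lt s' hmono' hL1' hL2' hP'cast
    -- now flip an edge/path to adjust scores at positions a and b
    set u := σ' ⟨b, hbn⟩ with hudef
    set v := σ' ⟨a, han⟩ with hvdef
    have hu : (score r' u : ℤ) = s b + 1 := by rw [hudef, hσ' ⟨b, hbn⟩]; exact hs'b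
    have hv : (score r' v : ℤ) = s a - 1 := by rw [hvdef, hσ' ⟨a, han⟩]; exact hs'a
    have hlt2 : score r' v < score r' u := by
      have h6 := hmono a b hab.le hbn
      have : (score r' v : ℤ) < (score r' u : ℤ) := by rw [hu, hv]; linarith
      exact_mod_cast this
    obtain ⟨r, hrt, hru, hrv, hro⟩ := exists_flip r' hr't u v hlt2
    refine ⟨r, hrt, σ', ?_⟩
    intro i
    by_cases hia : i.1 = a
    · have hieq : i = ⟨a, han⟩ := Fin.ext hia
      rw [hieq, ← hvdef]
      have : (score r v : ℤ) = (score r' v : ℤ) + 1 := by exact_mod_cast congrArg (Nat.cast (R := ℤ)) hrv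
      rw [this, hv]
      show s a - 1 + 1 = s a
      ring
    · by_cases hib : i.1 = b
      · have hieq : i = ⟨b, hbn⟩ := Fin.ext hib
        rw [hieq, ← hudef]
        have : (score r u : ℤ) + 1 = (score r' u : ℤ) := by exact_mod_cast congrArg (Nat.cast (R := ℤ)) hru
        show (score r u : ℤ) = s b
        linarith [hu]
      · have hne_u : σ' i ≠ u := by
          intro h
          exact hib (by rw [show i = ⟨b, hbn⟩ from σ'.injective h])
        have hne_v : σ' i ≠ v := by
          intro h
          exact hia (by rw [show i = ⟨a, han⟩ from σ'.injective h])
        rw [show score r (σ' i) = score r' (σ' i) from hro _ hne_u hne_v, hσ' i]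
        exact hs'o i.1 hia hib

theorem landau_sufficiency (n : ℕ) (s : ℕ → ℤ)
    (hmono : ∀ i j : ℕ, i ≤ j → j < n → s i ≤ s j)
    (hL1 : ∀ k : ℕ, 1 ≤ k → k ≤ n → (k.choose 2 : ℤ) ≤ ∑ i ∈ Finset.range k, s i)
    (hL2 : ∑ i ∈ Finset.range n, s i = (n.choose 2 : ℤ)) :
    IsScoreSeq n s := by
  have hnn : 0 ≤ ∑ k ∈ Finset.range n, (∑ i ∈ Finset.range k, s i - (k.choose 2 : ℤ)) := by
    apply Finset.sum_nonneg
    intro k hk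
    rcases Nat.eq_zero_or_pos k with rfl | h
    · simp
    · have := hL1 k h (le_of_lt (Finset.mem_range.mp hk))
      linarith
  obtain ⟨r, hrt, σ, hσ⟩ := landau_aux n
    (∑ k ∈ Finset.range n, (∑ i ∈ Finset.range k, s i - (k.choose 2 : ℤ))).toNat s
    hmono hL1 hL2 (Int.toNat_of_nonneg hnn)
  exact ⟨r, hrt, fun i j hij => hmono i.1 j.1 hij j.2, σ, hσ⟩
end

section
/- If S = (s_1,...,s_n) is the score sequence of some n-tournament, then d(R_n, S) ≤ d(R_n, Tr_n), where R_n is the regular sequence (n odd, all entries (n-1)/2) or nearly-regular sequence (n even), Tr_n = (0,1,...,n-1), and d is the L1 distance. -/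
open Finset

lemma regSeq_le (n : ℕ) (i j : ℕ) : regSeq n j ≤ regSeq n i + 1 := by
  unfold regSeq; split_ifs <;> omega

lemma regSeq_sum (n : ℕ) : ∑ i ∈ range n, regSeq n i = ∑ i ∈ range n, (i : ℤ) := by
  have hS : (∑ i ∈ range n, i) * 2 = n * (n - 1) := Finset.sum_range_id_mul_two n
  have hcast : ∑ i ∈ range n, (i : ℤ) = ((∑ i ∈ range n, i : ℕ) : ℤ) := by push_cast; rfl
  rcases Nat.even_or_odd n with he | ho
  · have hodd : ¬ Odd n := Nat.not_odd_iff_even.mpr he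
    obtain ⟨m, hm⟩ := he
    have hm' : n = 2 * m := by omega
    rcases Nat.eq_zero_or_pos n with h0 | h0
    · subst h0; simp
    have hsplit := Finset.sum_range_add_sum_Ico (fun i => regSeq n i) (Nat.div_le_self n 2)
    have e1 : ∑ i ∈ range (n / 2), regSeq n i = (n / 2 : ℕ) • (((n : ℤ) - 2) / 2) := by
      rw [Finset.sum_congr rfl (fun i hi => ?_), Finset.sum_const, Finset.card_range]
      simp only [regSeq, if_neg hodd, if_pos (mem_range.mp hi)]
    have e2 : ∑ i ∈ Ico (n / 2) n, regSeq n i = (n - n / 2 : ℕ) • ((n : ℤ) / 2) := by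
      rw [Finset.sum_congr rfl (fun i hi => ?_), Finset.sum_const, Nat.card_Ico]
      have := (mem_Ico.mp hi).1
      simp only [regSeq, if_neg hodd, if_neg (not_lt.mpr this)]
    rw [← hsplit, e1, e2, hcast]
    have d1 : ((n : ℤ) - 2) / 2 = (m : ℤ) - 1 := by omega
    have d2 : (n : ℤ) / 2 = (m : ℤ) := by omega
    have d3 : n / 2 = m := by omega
    have d4 : n - n / 2 = m := by omega
    rw [d1, d2, d4, d3, nsmul_eq_mul, nsmul_eq_mul]
    have hS' : ((∑ i ∈ range n, i : ℕ) : ℤ) * 2 = (n : ℤ) * ((n : ℤ) - 1) := by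
      have : ((n : ℕ) : ℤ) - 1 = ((n - 1 : ℕ) : ℤ) := by omega
      rw [this]; exact_mod_cast hS
    have hn : (n : ℤ) = 2 * m := by exact_mod_cast hm'
    nlinarith [hS']
  · have hoddn : Odd n := ho
    obtain ⟨m, hm⟩ := ho
    have e1 : ∑ i ∈ range n, regSeq n i = (n : ℕ) • (((n : ℤ) - 1) / 2) := by
      rw [Finset.sum_congr rfl (fun i _ => ?_), Finset.sum_const, Finset.card_range]
      simp only [regSeq, if_pos hoddn]
    rw [e1, hcast, nsmul_eq_mul]
    have d1 : ((n : ℤ) - 1) / 2 = (m : ℤ) := by omega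
    have hS' : ((∑ i ∈ range n, i : ℕ) : ℤ) * 2 = (n : ℤ) * ((n : ℤ) - 1) := by
      have h1 : 1 ≤ n := by omega
      have : ((n : ℕ) : ℤ) - 1 = ((n - 1 : ℕ) : ℤ) := by omega
      rw [this]; exact_mod_cast hS
    have hn : (n : ℤ) = 2 * m + 1 := by exact_mod_cast hm
    rw [d1]
    nlinarith [hS']

lemma exists_split (n : ℕ) (t : ℕ → ℤ) (hmono : ∀ i j, i ≤ j → j < n → t i ≤ t j) :
    ∃ k, k ≤ n ∧ (∀ i < k, t i ≤ regSeq n i) ∧ (∀ i, k ≤ i → i < n → regSeq n i ≤ t i) := by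
  classical
  set Q : ℕ → Prop := fun k => ∀ i < k, t i ≤ regSeq n i with hQdef
  have hQ0 : Q 0 := fun i hi => absurd hi (Nat.not_lt_zero i)
  refine ⟨Nat.findGreatest Q n, Nat.findGreatest_le n,
    Nat.findGreatest_spec (Nat.zero_le n) hQ0, ?_⟩
  intro i hki hin
  have hnQ : ¬ Q (i + 1) :=
    Nat.findGreatest_is_greatest (Nat.lt_succ_of_le hki) (Nat.succ_le_of_lt hin)
  simp only [hQdef] at hnQ
  push_neg at hnQ
  obtain ⟨i', hi', hti'⟩ := hnQ
  have h1 : regSeq n i ≤ regSeq n i' + 1 := regSeq_le n i' i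
  have h2 : t i' ≤ t i := hmono i' i (Nat.lt_succ_iff.mp hi') hin
  linarith

lemma abs_sum_eq (n k : ℕ) (t : ℕ → ℤ) (hk : k ≤ n)
    (h1 : ∀ i < k, t i ≤ regSeq n i) (h2 : ∀ i, k ≤ i → i < n → regSeq n i ≤ t i)
    (hsum : ∑ i ∈ range n, regSeq n i = ∑ i ∈ range n, t i) :
    ∑ i ∈ range n, |regSeq n i - t i| = 2 * ∑ i ∈ range k, (regSeq n i - t i) := by
  have hsplit := Finset.sum_range_add_sum_Ico (fun i => |regSeq n i - t i|) hk
  have hsplit2 := Finset.sum_range_add_sum_Ico (fun i => regSeq n i - t i) hk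
  have e1 : ∑ i ∈ range k, |regSeq n i - t i| = ∑ i ∈ range k, (regSeq n i - t i) :=
    Finset.sum_congr rfl (fun i hi =>
      abs_of_nonneg (by have := h1 i (mem_range.mp hi); linarith))
  have e2 : ∑ i ∈ Ico k n, |regSeq n i - t i| = ∑ i ∈ Ico k n, (t i - regSeq n i) := by
    refine Finset.sum_congr rfl (fun i hi => ?_)
    rw [mem_Ico] at hi
    rw [abs_sub_comm]
    exact abs_of_nonneg (by have := h2 i hi.1 hi.2; linarith)
  have e3 : ∑ i ∈ Ico k n, (t i - regSeq n i) + ∑ i ∈ Ico k n, (regSeq n i - t i) = 0 := by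
    rw [← Finset.sum_add_distrib]; simp
  have e4 : ∑ i ∈ range n, (regSeq n i - t i) = 0 := by
    rw [Finset.sum_sub_distrib, hsum]; ring
  linarith

lemma arith_main (n : ℕ) (s : ℕ → ℤ)
    (hmono : ∀ i j, i ≤ j → j < n → s i ≤ s j)
    (hsum : ∑ i ∈ range n, s i = ∑ i ∈ range n, (i : ℤ))
    (hpre : ∀ k, k ≤ n → (∑ i ∈ range k, (i : ℤ)) ≤ ∑ i ∈ range k, s i) :
    ∑ i ∈ range n, |regSeq n i - s i| ≤ ∑ i ∈ range n, |regSeq n i - (i : ℤ)| := by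
  obtain ⟨k, hkn, h1, h2⟩ := exists_split n s hmono
  obtain ⟨k', hk'n, h1', h2'⟩ :=
    exists_split n (fun i => (i : ℤ)) (fun i j hij _ => by simpa using (Nat.cast_le (α := ℤ)).mpr hij)
  rw [abs_sum_eq n k s hkn h1 h2 ((regSeq_sum n).trans hsum.symm)]
  rw [abs_sum_eq n k' _ hk'n h1' h2' (regSeq_sum n)]
  have step1 : ∑ i ∈ range k, (regSeq n i - s i) ≤ ∑ i ∈ range k, (regSeq n i - (i : ℤ)) := by
    rw [Finset.sum_sub_distrib, Finset.sum_sub_distrib]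
    have := hpre k hkn; linarith
  have step2 : ∑ i ∈ range k, (regSeq n i - (i : ℤ)) ≤ ∑ i ∈ range k', (regSeq n i - (i : ℤ)) := by
    rcases le_total k k' with h | h
    · have hs := Finset.sum_range_add_sum_Ico (fun i => regSeq n i - (i : ℤ)) h
      have hnn : 0 ≤ ∑ i ∈ Ico k k', (regSeq n i - (i : ℤ)) :=
        Finset.sum_nonneg (fun i hi => by
          rw [mem_Ico] at hi
          have := h1' i hi.2; linarith)
      linarith
    · have hs := Finset.sum_range_add_sum_Ico (fun i => regSeq n i - (i : ℤ)) h
      have hnp : ∑ i ∈ Ico k' k, (regSeq n i - (i : ℤ)) ≤ 0 :=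
        Finset.sum_nonpos (fun i hi => by
          rw [mem_Ico] at hi
          have := h2' i hi.1 (lt_of_lt_of_le hi.2 hkn); linarith)
      linarith
  linarith

lemma sum_internal {n : ℕ} {r : Fin n → Fin n → Bool} (hT : IsTournament r)
    (K : Finset (Fin n)) :
    ∑ i ∈ K, (K.filter (fun j => r i j = true)).card = K.card.choose 2 := by
  classical
  induction K using Finset.induction_on with
  | empty => simp
  | @insert a K' ha ih =>
    rw [Finset.sum_insert ha]
    have hterm_a : ((insert a K').filter (fun j => r a j = true)).card
        = (K'.filter (fun j => r a j = true)).card := by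
      rw [Finset.filter_insert, if_neg (by simp [hT.1 a])]
    have hterm : ∀ i ∈ K', ((insert a K').filter (fun j => r i j = true)).card
        = (K'.filter (fun j => r i j = true)).card + (if r i a = true then 1 else 0) := by
      intro i hi
      rw [Finset.filter_insert]
      by_cases h : r i a = true
      · rw [if_pos h, if_pos h,
          Finset.card_insert_of_notMem (fun hmem => ha (Finset.filter_subset _ _ hmem))]
      · rw [if_neg h, if_neg h, add_zero]
    rw [hterm_a, Finset.sum_congr rfl hterm, Finset.sum_add_distrib, ih]
    have hcount : ∑ i ∈ K', (if r i a = true then 1 else 0)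
        = (K'.filter (fun i => r i a = true)).card := (Finset.card_filter _ _).symm
    rw [hcount]
    have hpart : (K'.filter (fun j => r a j = true)).card
        + (K'.filter (fun i => r i a = true)).card = K'.card := by
      have hcongr : K'.filter (fun i => r i a = true)
          = K'.filter (fun i => ¬ (r a i = true)) := by
        apply Finset.filter_congr
        intro i hi
        have hne : a ≠ i := fun h => ha (h ▸ hi)
        rw [hT.2 a i hne]
        cases r i a <;> simp
      rw [hcongr, Finset.card_filter_add_card_filter_not]
    rw [Finset.card_insert_of_notMem ha]
    have hch : (K'.card + 1).choose 2 = K'.card.choose 2 + K'.card := by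
      rw [Nat.choose_succ_succ, Nat.choose_one_right, Nat.add_comm]
    omega

theorem distance_to_regular_le (n : ℕ) (s : ℕ → ℤ) (h : IsScoreSeq n s) :
    ∑ i ∈ Finset.range n, |regSeq n i - s i| ≤ ∑ i ∈ Finset.range n, |regSeq n i - (i : ℤ)| := by
  classical
  obtain ⟨r, hT, hmonoF, σ, hσ⟩ := h
  have hmono : ∀ i j, i ≤ j → j < n → s i ≤ s j := by
    intro i j hij hj
    exact hmonoF ⟨i, lt_of_le_of_lt hij hj⟩ ⟨j, hj⟩ hij
  have hscore_sum : ∀ K : Finset (Fin n), ((K.card.choose 2 : ℕ) : ℤ) ≤ ∑ i ∈ K, (score r i : ℤ) := by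
    intro K
    have h1 := sum_internal hT K
    have h2 : ∀ i ∈ K, (K.filter (fun j => r i j = true)).card ≤ score r i := fun i _ =>
      Finset.card_le_card (Finset.filter_subset_filter _ (Finset.subset_univ K))
    calc ((K.card.choose 2 : ℕ) : ℤ)
        = ((∑ i ∈ K, (K.filter (fun j => r i j = true)).card : ℕ) : ℤ) := by rw [h1]
      _ = ∑ i ∈ K, ((K.filter (fun j => r i j = true)).card : ℤ) := by push_cast; rfl
      _ ≤ ∑ i ∈ K, (score r i : ℤ) :=
          Finset.sum_le_sum (fun i hi => by exact_mod_cast h2 i hi)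
  have hscore_total : ∑ i : Fin n, (score r i : ℤ) = ((n.choose 2 : ℕ) : ℤ) := by
    have h1 := sum_internal hT (univ : Finset (Fin n))
    have h2 : ∑ i : Fin n, score r i = n.choose 2 := by
      simpa [score, Finset.card_univ] using h1
    exact_mod_cast h2
  have hgauss : ∀ k : ℕ, ∑ i ∈ range k, (i : ℤ) = ((k.choose 2 : ℕ) : ℤ) := by
    intro k
    have : ∑ i ∈ range k, (i : ℤ) = ((∑ i ∈ range k, i : ℕ) : ℤ) := by push_cast; rfl
    rw [this, Finset.sum_range_id, Nat.choose_two_right]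
  have hsum : ∑ i ∈ range n, s i = ∑ i ∈ range n, (i : ℤ) := by
    have e1 : ∑ i ∈ range n, s i = ∑ i : Fin n, s i.1 :=
      (Fin.sum_univ_eq_sum_range (fun i => s i) n).symm
    have e2 : ∑ i : Fin n, s i.1 = ∑ i : Fin n, (score r (σ i) : ℤ) :=
      Finset.sum_congr rfl (fun i _ => (hσ i).symm)
    have e3 : ∑ i : Fin n, (score r (σ i) : ℤ) = ∑ j : Fin n, (score r j : ℤ) :=
      Fintype.sum_equiv σ _ _ (fun i => rfl)
    rw [e1, e2, e3, hscore_total, hgauss n]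
  have hpre : ∀ k, k ≤ n → (∑ i ∈ range k, (i : ℤ)) ≤ ∑ i ∈ range k, s i := by
    intro k hk
    set T : Finset (Fin n) := univ.filter (fun i => (i : ℕ) < k) with hTdef
    have himg : T.image Fin.val = range k := by
      ext a
      simp only [hTdef, Finset.mem_image, Finset.mem_filter, Finset.mem_univ, true_and,
        Finset.mem_range]
      constructor
      · rintro ⟨i, hi, rfl⟩; exact hi
      · intro ha; exact ⟨⟨a, lt_of_lt_of_le ha hk⟩, ha, rfl⟩
    have hTcard : T.card = k := by
      rw [← Finset.card_range k, ← himg]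
      exact (Finset.card_image_of_injective T Fin.val_injective).symm
    have hs1 : ∑ i ∈ range k, s i = ∑ i ∈ T, s i.1 := by
      rw [← himg, Finset.sum_image (fun x _ y _ hxy => Fin.val_injective hxy)]
    have hs2 : ∑ i ∈ T, s i.1 = ∑ i ∈ T, (score r (σ i) : ℤ) :=
      Finset.sum_congr rfl (fun i _ => (hσ i).symm)
    have hs3 : ∑ i ∈ T, (score r (σ i) : ℤ) = ∑ j ∈ T.image σ, (score r j : ℤ) := by
      rw [Finset.sum_image (fun x _ y _ hxy => σ.injective hxy)]
    have hKcard : (T.image σ).card = k := by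
      rw [Finset.card_image_of_injective _ σ.injective, hTcard]
    calc ∑ i ∈ range k, (i : ℤ) = ((k.choose 2 : ℕ) : ℤ) := hgauss k
      _ = (((T.image σ).card.choose 2 : ℕ) : ℤ) := by rw [hKcard]
      _ ≤ ∑ j ∈ T.image σ, (score r j : ℤ) := hscore_sum _
      _ = ∑ i ∈ range k, s i := by rw [← hs3, ← hs2, ← hs1]
  exact arith_main n s hmono hsum hpre
end

section
/- For any non-decreasing integer sequence S = (s_1,...,s_n) satisfying Landau's conditions, c(S) := C(n,3) - Σ_{i=1}^n C(s_i,2) satisfies c(S) ≤ (n³-n)/24 when n is odd and c(S) ≤ (n³-4n)/24 when n is even, with equality exactly for the regular (resp. nearly-regular) sequence. -/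
open Finset

/-- `x * (x-1) / 2`, the binomial coefficient `C(x,2)` extended to integers. -/
def intChoose2 (x : ℤ) : ℤ := x * (x - 1) / 2

lemma two_intChoose2 (x : ℤ) : 2 * intChoose2 x = x * (x - 1) := by
  obtain ⟨k, hk⟩ := Int.even_mul_succ_self (x - 1)
  have h : x * (x - 1) = 2 * k := by linarith [hk]
  unfold intChoose2
  omega

lemma mul_pred_nonneg (d : ℤ) : 0 ≤ d * (d - 1) := by
  rcases le_or_gt 1 d with h | h
  · nlinarith
  · nlinarith

lemma choose23 (n : ℕ) : 2 * (n.choose 2 : ℤ) = n * ((n:ℤ) - 1) ∧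
    6 * (n.choose 3 : ℤ) = n * ((n:ℤ) - 1) * ((n:ℤ) - 2) := by
  induction n with
  | zero => simp
  | succ k ih =>
    obtain ⟨ih2, ih3⟩ := ih
    rw [Nat.choose_succ_succ' k 1, Nat.choose_succ_succ' k 2]
    constructor <;> push_cast [Nat.choose_one_right] <;> nlinarith [ih2, ih3]

lemma sum_block (T : Finset ℕ) (s : ℕ → ℤ) (M : ℤ) :
    2 * ∑ i ∈ T, intChoose2 (s i) = 2*(T.card:ℤ)*intChoose2 M
      + (∑ i ∈ T, (s i - M)*(s i - M - 1)) + 2*M*((∑ i ∈ T, s i) - T.card * M) := by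
  rw [Finset.mul_sum]
  have h : ∀ i ∈ T, 2 * intChoose2 (s i) = 2*intChoose2 M + (s i - M)*(s i - M - 1) + 2*M*(s i - M) :=
    fun i _ => by linear_combination two_intChoose2 (s i) - two_intChoose2 M
  rw [Finset.sum_congr rfl h, Finset.sum_add_distrib, Finset.sum_add_distrib,
    Finset.sum_const, ← Finset.mul_sum, Finset.sum_sub_distrib, Finset.sum_const]
  simp only [nsmul_eq_mul]
  ring


set_option maxHeartbeats 1000000 in
theorem cycle_count_max (n : ℕ) (s : ℕ → ℤ)
    (hmono : ∀ i j : ℕ, i ≤ j → j < n → s i ≤ s j)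
    (hL1 : ∀ k : ℕ, 1 ≤ k → k ≤ n → (k.choose 2 : ℤ) ≤ ∑ i ∈ Finset.range k, s i)
    (hL2 : ∑ i ∈ Finset.range n, s i = (n.choose 2 : ℤ)) :
    (Odd n →
      (n.choose 3 : ℤ) - ∑ i ∈ Finset.range n, intChoose2 (s i) ≤ ((n : ℤ) ^ 3 - n) / 24 ∧
      ((n.choose 3 : ℤ) - ∑ i ∈ Finset.range n, intChoose2 (s i) = ((n : ℤ) ^ 3 - n) / 24 ↔
        ∀ i < n, s i = regSeq n i)) ∧
    (Even n →
      (n.choose 3 : ℤ) - ∑ i ∈ Finset.range n, intChoose2 (s i) ≤ ((n : ℤ) ^ 3 - 4 * n) / 24 ∧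
      ((n.choose 3 : ℤ) - ∑ i ∈ Finset.range n, intChoose2 (s i) = ((n : ℤ) ^ 3 - 4 * n) / 24 ↔
        ∀ i < n, s i = regSeq n i)) := by
  obtain ⟨h2, h3⟩ := choose23 n
  constructor
  · -- odd case
    intro hodd
    obtain ⟨k, hk⟩ := hodd
    have hn : (n : ℤ) = 2 * (k:ℤ) + 1 := by push_cast [hk]; ring
    set c : ℤ := (k : ℤ) with hc
    have hreg : ∀ i, regSeq n i = c := by
      intro i
      rw [regSeq, if_pos ⟨k, hk⟩]
      omega
    have hblock := sum_block (Finset.range n) s c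
    rw [Finset.card_range, hL2] at hblock
    set Q : ℤ := ∑ i ∈ Finset.range n, (s i - c) * (s i - c - 1) with hQdef
    have hQ : 0 ≤ Q := Finset.sum_nonneg fun i _ => mul_pred_nonneg _
    have hC2 : 2 * (n.choose 2 : ℤ) = 2 * (n:ℤ) * c := by
      linear_combination h2 + (n:ℤ) * hn
    set e : ℤ := intChoose2 c with he'
    have he : 2 * e = c * (c - 1) := two_intChoose2 c
    have h2F : 2 * ∑ i ∈ Finset.range n, intChoose2 (s i) = 2 * (n:ℤ) * e + Q := by
      linear_combination hblock + c * hC2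
    rw [hn] at h3 ⊢
    have hXval : (2*c+1) ^ 3 - (2*c+1) = 24 * ((n.choose 3 : ℤ) - (2*c+1) * e) := by
      linear_combination (-4) * h3 + 12 * (2*c+1) * he
    rw [hn] at h2F
    rw [hXval, Int.mul_ediv_cancel_left _ (by norm_num : (24:ℤ) ≠ 0)]
    constructor
    · linarith
    · constructor
      · intro hEq
        have hQ0 : Q = 0 := by linarith
        have hterm := (Finset.sum_eq_zero_iff_of_nonneg
          (fun i _ => mul_pred_nonneg (s i - c))).mp hQ0
        have hnonneg : ∀ i ∈ Finset.range n, 0 ≤ s i - c := by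
          intro i hi
          rcases mul_eq_zero.mp (hterm i hi) with h | h <;> linarith
        have hsum0 : ∑ i ∈ Finset.range n, (s i - c) = 0 := by
          rw [Finset.sum_sub_distrib, Finset.sum_const, Finset.card_range, hL2]
          simp only [nsmul_eq_mul]
          linarith
        have hz := (Finset.sum_eq_zero_iff_of_nonneg hnonneg).mp hsum0
        intro i hi
        rw [hreg i]
        have := hz i (Finset.mem_range.mpr hi)
        linarith
      · intro hall
        have hFval : ∑ i ∈ Finset.range n, intChoose2 (s i) = (n:ℤ) * e := by
          rw [Finset.sum_congr rfl (fun i hi => by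
            rw [hall i (Finset.mem_range.mp hi), hreg i]), Finset.sum_const,
            Finset.card_range]
          simp [nsmul_eq_mul, he']
        rw [hFval, hn]
  · -- even case
    intro heven
    obtain ⟨m, hm⟩ := heven
    by_cases hm0 : m = 0
    · subst hm0
      simp only [Nat.add_zero] at hm
      subst hm
      norm_num
    have hm1 : 1 ≤ m := Nat.pos_of_ne_zero hm0
    have hnotodd : ¬ Odd n := by
      rw [Nat.odd_iff]; omega
    have hn : (n : ℤ) = 2 * (m:ℤ) := by push_cast [hm]; ring
    have hndiv : n / 2 = m := by omega
    have hreg : ∀ i, regSeq n i = if i < m then ((m:ℤ) - 1) else (m:ℤ) := by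
      intro i
      rw [regSeq, if_neg hnotodd, hndiv]
      split <;> omega
    have hsplitrange : ∀ f : ℕ → ℤ,
        ∑ i ∈ Finset.range n, f i = ∑ i ∈ Finset.range m, f i + ∑ i ∈ Finset.Ico m n, f i := by
      intro f
      rw [Finset.range_eq_Ico, ← Finset.sum_Ico_consecutive f (Nat.zero_le m) (by omega),
        ← Finset.range_eq_Ico]
    have hcard : (Finset.Ico m n).card = m := by rw [Nat.card_Ico]; omega
    set A : ℤ := ∑ i ∈ Finset.range m, s i with hAdef
    have hB : ∑ i ∈ Finset.Ico m n, s i = (n.choose 2 : ℤ) - A := by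
      rw [hsplitrange s] at hL2; linarith
    have h2C2 : 2 * (n.choose 2 : ℤ) = 2 * (m:ℤ) * (2*(m:ℤ) - 1) := by
      linear_combination h2 + ((n:ℤ) + 2*(m:ℤ) - 1) * hn
    -- key partial sum bound
    have hA : A ≤ (m:ℤ) * ((m:ℤ) - 1) := by
      by_contra hcon
      push_neg at hcon
      have h1 : A ≤ (m:ℤ) * s (m-1) := by
        calc A ≤ ∑ _i ∈ Finset.range m, s (m-1) :=
              Finset.sum_le_sum (fun i hi => hmono i (m-1)
                (by have := Finset.mem_range.mp hi; omega) (by omega))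
          _ = (m:ℤ) * s (m-1) := by
              rw [Finset.sum_const, Finset.card_range]; simp [nsmul_eq_mul]
      have hM2 : (m:ℤ) ≤ s (m-1) := by
        by_contra hM
        push_neg at hM
        have hle : s (m-1) ≤ (m:ℤ) - 1 := by omega
        have : (m:ℤ) * s (m-1) ≤ (m:ℤ) * ((m:ℤ) - 1) :=
          mul_le_mul_of_nonneg_left hle (by positivity)
        linarith
      have h3' : (m:ℤ) * (m:ℤ) ≤ ∑ i ∈ Finset.Ico m n, s i := by
        calc (m:ℤ) * (m:ℤ) ≤ (m:ℤ) * s (m-1) :=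
              mul_le_mul_of_nonneg_left hM2 (by positivity)
          _ = ∑ _i ∈ Finset.Ico m n, s (m-1) := by
              rw [Finset.sum_const, hcard]; simp [nsmul_eq_mul]
          _ ≤ ∑ i ∈ Finset.Ico m n, s i :=
              Finset.sum_le_sum (fun i hi => by
                have h := Finset.mem_Ico.mp hi
                exact hmono (m-1) i (by omega) h.2)
      nlinarith [hB, h2C2]
    -- sum decomposition
    have hbl1 := sum_block (Finset.range m) s ((m:ℤ) - 1)
    rw [Finset.card_range] at hbl1
    have hbl2 := sum_block (Finset.Ico m n) s (m:ℤ)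
    rw [hcard, hB] at hbl2
    set Q1 : ℤ := ∑ i ∈ Finset.range m, (s i - ((m:ℤ)-1)) * (s i - ((m:ℤ)-1) - 1) with hQ1def
    set Q2 : ℤ := ∑ i ∈ Finset.Ico m n, (s i - (m:ℤ)) * (s i - (m:ℤ) - 1) with hQ2def
    have hQ1 : 0 ≤ Q1 := Finset.sum_nonneg fun i _ => mul_pred_nonneg _
    have hQ2 : 0 ≤ Q2 := Finset.sum_nonneg fun i _ => mul_pred_nonneg _
    set e1 : ℤ := intChoose2 ((m:ℤ) - 1) with he1'
    set e2 : ℤ := intChoose2 (m:ℤ) with he2'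
    have he1 : 2 * e1 = ((m:ℤ)-1) * ((m:ℤ) - 2) := by
      have := two_intChoose2 ((m:ℤ) - 1); linarith [this]
    have he2 : 2 * e2 = (m:ℤ) * ((m:ℤ) - 1) := two_intChoose2 (m:ℤ)
    have hsp := hsplitrange (fun i => intChoose2 (s i))
    have h2F : 2 * ∑ i ∈ Finset.range n, intChoose2 (s i)
        = 2*(m:ℤ)*e1 + 2*(m:ℤ)*e2 + Q1 + Q2 + 2*((m:ℤ)*((m:ℤ)-1) - A) := by
      linear_combination 2 * hsp + hbl1 + hbl2 + (m:ℤ) * h2C2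
    rw [hn] at h3 ⊢
    have hXval : (2*(m:ℤ)) ^ 3 - 4 * (2*(m:ℤ))
        = 24 * ((n.choose 3 : ℤ) - (m:ℤ)*e1 - (m:ℤ)*e2) := by
      linear_combination (-4) * h3 + 12 * (m:ℤ) * he1 + 12 * (m:ℤ) * he2
    rw [hXval, Int.mul_ediv_cancel_left _ (by norm_num : (24:ℤ) ≠ 0)]
    constructor
    · linarith
    · constructor
      · intro hEq
        have hQ1z : Q1 = 0 := by linarith
        have hQ2z : Q2 = 0 := by linarith
        have hAz : A = (m:ℤ) * ((m:ℤ) - 1) := by linarith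
        have ht1 := (Finset.sum_eq_zero_iff_of_nonneg
          (fun i _ => mul_pred_nonneg (s i - ((m:ℤ)-1)))).mp hQ1z
        have ht2 := (Finset.sum_eq_zero_iff_of_nonneg
          (fun i _ => mul_pred_nonneg (s i - (m:ℤ)))).mp hQ2z
        have hn1 : ∀ i ∈ Finset.range m, 0 ≤ s i - ((m:ℤ)-1) := by
          intro i hi
          rcases mul_eq_zero.mp (ht1 i hi) with h | h <;> linarith
        have hn2 : ∀ i ∈ Finset.Ico m n, 0 ≤ s i - (m:ℤ) := by
          intro i hi
          rcases mul_eq_zero.mp (ht2 i hi) with h | h <;> linarith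
        have hsum1 : ∑ i ∈ Finset.range m, (s i - ((m:ℤ)-1)) = 0 := by
          rw [Finset.sum_sub_distrib, Finset.sum_const, Finset.card_range]
          simp only [nsmul_eq_mul]
          linarith [hAdef]
        have hsum2 : ∑ i ∈ Finset.Ico m n, (s i - (m:ℤ)) = 0 := by
          rw [Finset.sum_sub_distrib, Finset.sum_const, hcard, hB]
          simp only [nsmul_eq_mul]
          linarith [hAz, h2C2]
        have hz1 := (Finset.sum_eq_zero_iff_of_nonneg hn1).mp hsum1
        have hz2 := (Finset.sum_eq_zero_iff_of_nonneg hn2).mp hsum2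
        intro i hi
        rw [hreg i]
        by_cases him : i < m
        · rw [if_pos him]
          have := hz1 i (Finset.mem_range.mpr him)
          linarith
        · rw [if_neg him]
          have := hz2 i (Finset.mem_Ico.mpr ⟨by omega, hi⟩)
          linarith
      · intro hall
        have hF1 : ∑ i ∈ Finset.range m, intChoose2 (s i) = (m:ℤ) * e1 := by
          rw [Finset.sum_congr rfl (fun i hi => by
            have him := Finset.mem_range.mp hi
            rw [hall i (by omega), hreg i, if_pos him]), Finset.sum_const,
            Finset.card_range]
          simp [nsmul_eq_mul, he1']
        have hF2 : ∑ i ∈ Finset.Ico m n, intChoose2 (s i) = (m:ℤ) * e2 := by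
          rw [Finset.sum_congr rfl (fun i hi => by
            have him := Finset.mem_Ico.mp hi
            rw [hall i him.2, hreg i, if_neg (by omega)]), Finset.sum_const, hcard]
          simp [nsmul_eq_mul, he2']
        rw [hsp, hF1, hF2]
        ring
end

section
/- An n-tournament T is not strong if and only if there exists k with 1 ≤ k < n such that the sum of the k smallest scores of T equals C(k,2). -/
open Finset

lemma two_mul_choose_two_s18 (k : ℕ) : 2 * k.choose 2 = k * (k - 1) := by
  induction k with
  | zero => rfl
  | succ m ih =>
    rw [Nat.choose_succ_succ, Nat.choose_one_right, Nat.mul_add, ih]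
    rcases m with _ | m
    · rfl
    · simp only [Nat.succ_sub_one]
      ring

lemma internal_card {n : ℕ} {r : Fin n → Fin n → Bool} (ht : IsTournament r)
    (U : Finset (Fin n)) :
    ((U ×ˢ U).filter fun p => r p.1 p.2 = true).card = U.card.choose 2 := by
  have hod : (U ×ˢ U).filter (fun p => r p.1 p.2 = true)
      = U.offDiag.filter (fun p => r p.1 p.2 = true) := by
    ext p
    simp only [mem_filter, mem_product, mem_offDiag]
    constructor
    · rintro ⟨⟨h1, h2⟩, h3⟩
      refine ⟨⟨h1, h2, ?_⟩, h3⟩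
      intro heq
      rw [heq, ht.1] at h3; exact absurd h3 (by simp)
    · rintro ⟨⟨h1, h2, _⟩, h3⟩
      exact ⟨⟨h1, h2⟩, h3⟩
  have hbij : (U.offDiag.filter (fun p => r p.1 p.2 = true)).card
      = (U.offDiag.filter (fun p => ¬ (r p.1 p.2 = true))).card := by
    apply Finset.card_bij (fun p _ => p.swap)
    · rintro ⟨a, b⟩ hp
      simp only [mem_filter, mem_offDiag] at hp ⊢
      refine ⟨⟨hp.1.2.1, hp.1.1, (Ne.symm hp.1.2.2)⟩, ?_⟩
      show ¬ r b a = true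
      rw [ht.2 b a (Ne.symm hp.1.2.2), hp.2]
      simp
    · rintro ⟨a, b⟩ h1 ⟨c, d⟩ h2 h
      simpa [Prod.ext_iff, and_comm] using h
    · rintro ⟨a, b⟩ hp
      refine ⟨(b, a), ?_, rfl⟩
      simp only [mem_filter, mem_offDiag] at hp ⊢
      refine ⟨⟨hp.1.2.1, hp.1.1, Ne.symm hp.1.2.2⟩, ?_⟩
      rw [ht.2 b a (Ne.symm hp.1.2.2)]
      simp only [Bool.not_eq_true] at hp
      rw [hp.2]
      simp
  have hsplit := Finset.card_filter_add_card_filter_not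
    (s := U.offDiag) (p := fun p => r p.1 p.2 = true)
  rw [Finset.offDiag_card] at hsplit
  have hx : U.card * (U.card - 1) = U.card * U.card - U.card := Nat.mul_pred ..
  have h2 : 2 * ((U.offDiag.filter fun p => r p.1 p.2 = true)).card
      = U.card * (U.card - 1) := by omega
  rw [hod]
  have := two_mul_choose_two_s18 U.card
  omega

lemma sum_score_decomp {n : ℕ} {r : Fin n → Fin n → Bool} (ht : IsTournament r)
    (U : Finset (Fin n)) :
    ∑ v ∈ U, score r v
      = U.card.choose 2 + ((U ×ˢ (univ \ U)).filter fun p => r p.1 p.2 = true).card := by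
  have h1 : ∑ v ∈ U, score r v = ((U ×ˢ univ).filter fun p => r p.1 p.2 = true).card := by
    rw [Finset.card_filter, Finset.sum_product]
    refine Finset.sum_congr rfl fun v _ => ?_
    rw [score, Finset.card_filter]
  have h2 : ((U ×ˢ univ).filter fun p => r p.1 p.2 = true)
      = ((U ×ˢ U).filter fun p => r p.1 p.2 = true)
        ∪ ((U ×ˢ (univ \ U)).filter fun p => r p.1 p.2 = true) := by
    ext p
    simp only [mem_filter, mem_product, mem_union, mem_sdiff, mem_univ, true_and]
    by_cases hp : p.2 ∈ U <;> tauto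
  have hdisj : Disjoint ((U ×ˢ U).filter fun p => r p.1 p.2 = true)
      ((U ×ˢ (univ \ U)).filter fun p => r p.1 p.2 = true) := by
    apply Finset.disjoint_filter_filter
    apply Finset.disjoint_left.2
    rintro p hp hq
    simp only [mem_product, mem_sdiff, mem_univ, true_and] at hp hq
    exact hq.2 hp.2
  rw [h1, h2, Finset.card_union_of_disjoint hdisj, internal_card ht]

lemma strictMono_fin_le {k : ℕ} (g : Fin k → ℕ) (hg : StrictMono g) :
    ∀ m (hm : m < k), m ≤ g ⟨m, hm⟩ := by
  intro m
  induction m with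
  | zero => intro _; exact Nat.zero_le _
  | succ p ih =>
    intro hm
    have h1 : p < k := Nat.lt_of_succ_lt hm
    have h2 := hg (show (⟨p, h1⟩ : Fin k) < ⟨p + 1, hm⟩ by simp [Fin.lt_def])
    have := ih h1
    omega

lemma sum_prefix_le {n : ℕ} (s : ℕ → ℤ)
    (hmono : ∀ i j : Fin n, i ≤ j → s i.1 ≤ s j.1)
    (A : Finset (Fin n)) :
    ∑ i ∈ Finset.range A.card, s i ≤ ∑ a ∈ A, s a.1 := by
  have hkn : A.card ≤ n := by simpa using A.card_le_univ
  set k := A.card with hk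
  let e := A.orderEmbOfFin rfl
  have heq : ∑ a ∈ A, s a.1 = ∑ i : Fin k, s (e i).1 := by
    rw [← Finset.sum_attach A (fun a => s a.1)]
    apply Finset.sum_bij (fun (a : {x // x ∈ A}) _ => (A.orderIsoOfFin rfl).symm ⟨a.1, a.2⟩)
    · intros; exact Finset.mem_univ _
    · intro a _ b _ h
      have := congrArg (A.orderIsoOfFin rfl) h
      simp at this
      exact Subtype.ext (by exact_mod_cast congrArg Subtype.val this)
    · intro i _
      refine ⟨⟨(A.orderIsoOfFin rfl i).1, (A.orderIsoOfFin rfl i).2⟩, Finset.mem_attach _ _,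
        by rw [OrderIso.symm_apply_eq]⟩
    · intro a _
      show s a.1.1 = s (e ((A.orderIsoOfFin rfl).symm ⟨a.1, a.2⟩)).1
      have : e ((A.orderIsoOfFin rfl).symm ⟨a.1, a.2⟩) = a.1 := by
        show ((A.orderIsoOfFin rfl) ((A.orderIsoOfFin rfl).symm ⟨a.1, a.2⟩)).1 = a.1
        simp
      rw [this]
  rw [heq, ← Fin.sum_univ_eq_sum_range]
  apply Finset.sum_le_sum
  intro i _
  have hsm : StrictMono (fun j : Fin k => (e j).1) := fun a b hab => e.strictMono hab
  have hle : i.1 ≤ (e i).1 := by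
    have := strictMono_fin_le _ hsm i.1 i.2
    simpa using this
  exact hmono ⟨i.1, lt_of_lt_of_le i.2 hkn⟩ (e i) hle

/-- The image under σ of the first k indices, with its card and score sum. -/
lemma prefix_image {n k : ℕ} (hk : k ≤ n) (σ : Equiv.Perm (Fin n))
    (r : Fin n → Fin n → Bool) (s : ℕ → ℤ) (hσ : ∀ i : Fin n, (score r (σ i) : ℤ) = s i.1) :
    ∃ V : Finset (Fin n), V.card = k ∧ (∑ v ∈ V, (score r v : ℤ)) = ∑ i ∈ Finset.range k, s i := by
  have hinj : Function.Injective (fun i : Fin k => σ ⟨i.1, lt_of_lt_of_le i.2 hk⟩) := by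
    intro a b h
    have h2 := σ.injective h
    simp only [Fin.mk.injEq] at h2
    exact Fin.ext h2
  refine ⟨Finset.image (fun i : Fin k => σ ⟨i.1, lt_of_lt_of_le i.2 hk⟩) Finset.univ, ?_, ?_⟩
  · rw [Finset.card_image_of_injective _ hinj, Finset.card_univ, Fintype.card_fin]
  · rw [Finset.sum_image (fun a _ b _ h => hinj h), ← Fin.sum_univ_eq_sum_range]
    exact Finset.sum_congr rfl fun i _ => hσ ⟨i.1, lt_of_lt_of_le i.2 hk⟩

theorem not_strong_iff_tight_prefix (n : ℕ) (r : Fin n → Fin n → Bool)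
    (ht : IsTournament r) (s : ℕ → ℤ) (hs : IsScoreSeqOf s r) :
    ¬ IsStrong r ↔
      ∃ k : ℕ, 1 ≤ k ∧ k < n ∧ ∑ i ∈ Finset.range k, s i = (k.choose 2 : ℤ) := by
  classical
  obtain ⟨hmono, σ, hσ⟩ := hs
  constructor
  · intro hns
    unfold IsStrong at hns
    push_neg at hns
    obtain ⟨i, j, hij⟩ := hns
    set U : Finset (Fin n) :=
      univ.filter (fun v => ¬ Relation.ReflTransGen (fun a b => r a b = true) v j) with hU
    have hiU : i ∈ U := by simp [hU, hij]
    have hjU : j ∉ U := by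
      simp only [hU, mem_filter, mem_univ, true_and, not_not]
      exact Relation.ReflTransGen.refl
    set k := U.card with hk
    have hk1 : 1 ≤ k := Finset.card_pos.2 ⟨i, hiU⟩
    have hkn : k < n := by
      have hss : U ⊂ univ := Finset.ssubset_univ_iff.2 (fun h => hjU (h ▸ mem_univ j))
      have := Finset.card_lt_card hss
      simpa using this
    have hcross : ((U ×ˢ (univ \ U)).filter fun p => r p.1 p.2 = true) = ∅ := by
      rw [Finset.eq_empty_iff_forall_notMem]
      rintro ⟨a, b⟩ hp
      simp only [mem_filter, mem_product, mem_sdiff, mem_univ, true_and] at hp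
      obtain ⟨⟨ha, hb⟩, hr⟩ := hp
      simp only [hU, mem_filter, mem_univ, true_and, not_not] at ha hb
      exact ha (Relation.ReflTransGen.head hr hb)
    have hsum : ∑ v ∈ U, score r v = k.choose 2 := by
      rw [sum_score_decomp ht U, hcross]
      simp [hk]
    refine ⟨k, hk1, hkn, le_antisymm ?_ ?_⟩
    · -- upper bound via the set U
      have hc : (U.image σ.symm).card = k := by
        rw [Finset.card_image_of_injective _ σ.symm.injective]
      have h1 : ∑ i ∈ Finset.range k, s i ≤ ∑ a ∈ U.image σ.symm, s a.1 := by
        have := sum_prefix_le s hmono (U.image σ.symm)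
        rwa [hc] at this
      have h2 : ∑ a ∈ U.image σ.symm, s a.1 = ∑ v ∈ U, (score r v : ℤ) := by
        rw [Finset.sum_image (fun a _ b _ h => σ.symm.injective h)]
        refine Finset.sum_congr rfl fun v _ => ?_
        rw [← hσ (σ.symm v), Equiv.apply_symm_apply]
      have h3 : ∑ v ∈ U, (score r v : ℤ) = (k.choose 2 : ℤ) := by
        rw [← Nat.cast_sum, hsum]
      rw [h2, h3] at h1
      exact h1
    · -- lower bound via any k-set
      obtain ⟨V, hVcard, hVsum⟩ := prefix_image hkn.le σ r s hσ
      have hdec := sum_score_decomp ht V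
      rw [hVcard] at hdec
      have : (k.choose 2 : ℤ) ≤ ∑ v ∈ V, (score r v : ℤ) := by
        rw [← Nat.cast_sum, hdec]
        push_cast
        omega
      rwa [hVsum] at this
  · rintro ⟨k, hk1, hkn, hsum⟩
    obtain ⟨V, hVcard, hVsum⟩ := prefix_image hkn.le σ r s hσ
    have hdec := sum_score_decomp ht V
    rw [hVcard] at hdec
    have hcross : ((V ×ˢ (univ \ V)).filter fun p => r p.1 p.2 = true).card = 0 := by
      have hz : (↑(∑ v ∈ V, score r v) : ℤ) = (k.choose 2 : ℤ) := by
        rw [Nat.cast_sum, hVsum, hsum]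
      rw [hdec] at hz
      push_cast at hz
      omega
    rw [Finset.card_eq_zero, Finset.eq_empty_iff_forall_notMem] at hcross
    have hclosed : ∀ a b : Fin n, a ∈ V → r a b = true → b ∈ V := by
      intro a b ha hr
      by_contra hb
      exact hcross (a, b) (by simp [mem_filter, mem_product, ha, hb, hr])
    obtain ⟨u, hu⟩ : ∃ u, u ∈ V := Finset.card_pos.1 (by omega)
    obtain ⟨w, hw⟩ : ∃ w, w ∉ V := by
      by_contra h
      push_neg at h
      have : V = univ := Finset.eq_univ_iff_forall.2 h
      rw [this] at hVcard
      simp at hVcard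
      omega
    intro hst
    have hreach := hst u w
    have : ∀ v, Relation.ReflTransGen (fun a b => r a b = true) u v → v ∈ V := by
      intro v h
      induction h with
      | refl => exact hu
      | tail _ hbc ih => exact hclosed _ _ ih hbc
    exact hw (this w hreach)
end
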